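/- arXiv:1204.5198 — 2 statements merged into one kernel-verified Lean document; each statement's English description precedes it below -/
import Mathlib

section
/- For any analytic set A ⊆ ω^ω, either there exists a Hechler tree H with [H] ∩ A = ∅, or there exists a Laver tree L with [L] ⊆ A. -/
/-- The restriction `x↾n` of `x : ℕ → ℕ` to its first `n` values, as a finite sequence. -/
def res (x : ℕ → ℕ) (n : ℕ) : List ℕ := List.ofFn fun i : Fin n => x i

/-- A subtree of `ω^{<ω}`: a set of finite sequences closed under initial segments. -/
def IsSubtree (T : Set (List ℕ)) : Prop := ∀ s ∈ T, ∀ t : List ℕ, t <+: s → t ∈ T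

/-- `[T]`, the set of branches of a subtree `T`. -/
def branches (T : Set (List ℕ)) : Set (ℕ → ℕ) := {x | ∀ n, res x n ∈ T}

/-- A Hechler tree: a (nonempty) subtree in which every node splits cofinitely often. -/
def IsHechler (T : Set (List ℕ)) : Prop :=
  IsSubtree T ∧ [] ∈ T ∧ ∀ s ∈ T, {n : ℕ | s ++ [n] ∉ T}.Finite

/-- A Laver tree: a (nonempty) subtree in which every node splits infinitely often. -/
def IsLaver (T : Set (List ℕ)) : Prop :=
  IsSubtree T ∧ [] ∈ T ∧ ∀ s ∈ T, {n : ℕ | s ++ [n] ∈ T}.Infinite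

/-- A set `A ⊆ ω^ω` is analytic iff it is a continuous image of a closed subset of `ω^ω`. -/
def IsAnalytic (A : Set (ℕ → ℕ)) : Prop :=
  ∃ (C : Set (ℕ → ℕ)) (f : (ℕ → ℕ) → (ℕ → ℕ)),
    IsClosed C ∧ ContinuousOn f C ∧ A = f '' C

/-!
Write `A = f '' C` with `C` closed and `f` continuous on `C`. Call `S ⊆ ω^ω` dominating (from
level `k`) if every `g : ω^{<ω} → ω` is dominated, `g (x↾n) < x n` for all `n ≥ k`, by some
`x ∈ S`. If `A` is not dominating, the sequences dominating a witness `g` form a Hechler tree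
avoiding `A`.

Otherwise call `(s, u)` positive if the points of `f '' (C ∩ cyl u)` extending `s` are dominating
from level `|s|`. A positive pair has infinitely many positive children `(s⌢a, u)`, and a
diagonal argument shows that from every positive pair a well-founded, infinitely branching tree
of nodes `t` leads to pairs `(t, u⌢m)` that are again positive. The Laver tree follows these
ranked trees and lengthens `u` whenever it can, so along a branch `x` the `u`'s converge to
some `y ∈ C`; continuity of `f` then gives `f y = x`.
-/

open Set Filter Topology

@[simp] lemma res_length (x : ℕ → ℕ) (n : ℕ) : (res x n).length = n := by simp [res]

@[simp] lemma getElem_res (x : ℕ → ℕ) {n i : ℕ} (h : i < (res x n).length) :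
    (res x n)[i] = x i := by
  simp [res]

lemma res_succ (x : ℕ → ℕ) (n : ℕ) : res x (n + 1) = res x n ++ [x n] := by
  simp only [res, List.ofFn_succ_last]; rfl

lemma take_res (x : ℕ → ℕ) {m n : ℕ} (h : n ≤ m) : (res x m).take n = res x n :=
  List.ext_getElem (by simp only [List.length_take, res_length]; omega) (by simp)

def cyl (s : List ℕ) : Set (ℕ → ℕ) := {x | res x s.length = s}

lemma mem_cyl_res (x : ℕ → ℕ) (n : ℕ) : x ∈ cyl (res x n) := by simp [cyl]

@[simp] lemma cyl_nil : cyl [] = univ := by ext x; simp [cyl, res]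

lemma apply_eq_getElem_of_mem_cyl {x : ℕ → ℕ} {s : List ℕ} (hx : x ∈ cyl s) {i : ℕ}
    (hi : i < s.length) : x i = s[i] := by
  have : res x s.length = s := hx
  simp only [← getElem_res x (n := s.length) (i := i) (by simpa using hi), this]

lemma mem_cyl_append_singleton {x : ℕ → ℕ} {s : List ℕ} {a : ℕ} :
    x ∈ cyl (s ++ [a]) ↔ x ∈ cyl s ∧ x s.length = a := by
  simp only [cyl, mem_ofPred_eq, List.length_append, List.length_singleton, res_succ]
  constructor
  · intro h
    obtain ⟨h1, h2⟩ := List.append_inj' h rfl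
    exact ⟨h1, by simpa using h2⟩
  · rintro ⟨h1, rfl⟩
    rw [h1]

lemma mem_cyl_append_apply {y : ℕ → ℕ} {u : List ℕ} (hy : y ∈ cyl u) :
    y ∈ cyl (u ++ [y u.length]) :=
  mem_cyl_append_singleton.mpr ⟨hy, rfl⟩

lemma cyl_append_subset (u : List ℕ) (m : ℕ) : cyl (u ++ [m]) ⊆ cyl u :=
  fun _ hy => (mem_cyl_append_singleton.mp hy).1

def Dominates (g : List ℕ → ℕ) (k : ℕ) (x : ℕ → ℕ) : Prop := ∀ n, k ≤ n → g (res x n) < x n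

/-- For `k = 0`: `S` meets the branches of every Hechler tree, as each one contains some
`hechlerTree g`. -/
def IsDominating (k : ℕ) (S : Set (ℕ → ℕ)) : Prop := ∀ g, ∃ x ∈ S, Dominates g k x

lemma IsDominating.mono {k : ℕ} {S T : Set (ℕ → ℕ)} (h : IsDominating k S) (hST : S ⊆ T) :
    IsDominating k T :=
  fun g => let ⟨x, hx, hg⟩ := h g; ⟨x, hST hx, hg⟩

lemma IsDominating.nonempty {k : ℕ} {S : Set (ℕ → ℕ)} (h : IsDominating k S) : S.Nonempty :=
  let ⟨x, hx, _⟩ := h 0; ⟨x, hx⟩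

lemma exists_dominates_imp_isDominating (k : ℕ) (S : Set (ℕ → ℕ)) :
    ∃ g, ∀ x ∈ S, Dominates g k x → IsDominating k S := by
  by_cases h : IsDominating k S
  · exact ⟨0, fun _ _ _ => h⟩
  · obtain ⟨g, hg⟩ := not_forall.mp h
    exact ⟨g, fun x hx hdom => (hg ⟨x, hx, hdom⟩).elim⟩

lemma isDominating_cyl_iff {s : List ℕ} {S : Set (ℕ → ℕ)} :
    IsDominating s.length (cyl s ∩ S) ↔
      {a | IsDominating (s.length + 1) (cyl (s ++ [a]) ∩ S)}.Infinite := by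
  rw [infinite_iff_exists_gt]
  constructor
  · intro h N
    by_contra! hN
    choose g hg using fun a =>
      exists_dominates_imp_isDominating (s.length + 1) (cyl (s ++ [a]) ∩ S)
    -- the test function reads the branching value `a = r[|s|]` off the node and plays `g a`
    obtain ⟨x, ⟨hxs, hxS⟩, hdom⟩ := h fun r => max N (g (r.getD s.length 0) r)
    have hN_lt : N < x s.length := (le_max_left _ _).trans_lt (hdom _ le_rfl)
    refine absurd hN_lt (not_lt.mpr (hN _ (hg _ x ⟨mem_cyl_append_singleton.mpr ⟨hxs, rfl⟩, hxS⟩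
      fun n hn => ?_)))
    have hs : s.length < (res x n).length := by rw [res_length]; omega
    have hG : max N (g ((res x n).getD s.length 0) (res x n)) < x n := hdom n (by omega)
    rw [List.getD_eq_getElem _ _ hs, getElem_res, max_lt_iff] at hG
    exact hG.2
  · intro h g
    obtain ⟨a, hpos, ha⟩ := h (g s)
    obtain ⟨x, ⟨hxa, hxS⟩, hdom⟩ := hpos g
    obtain ⟨hxs, rfl⟩ := mem_cyl_append_singleton.mp hxa
    refine ⟨x, ⟨hxs, hxS⟩, fun n hn => ?_⟩
    rcases hn.eq_or_lt with rfl | hn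
    · rwa [show res x s.length = s from hxs]
    · exact hdom n hn

def hechlerTree (g : List ℕ → ℕ) : Set (List ℕ) :=
  {t | ∀ i (h : i < t.length), g (t.take i) < t[i]}

lemma isHechler_hechlerTree (g : List ℕ → ℕ) : IsHechler (hechlerTree g) := by
  refine ⟨?_, fun i h => absurd h (by simp), fun s hs => ?_⟩
  · intro t ht t' ⟨r, hr⟩ i hi
    subst hr
    have := ht i (by rw [List.length_append]; omega)
    rwa [List.take_append_of_le_length hi.le, List.getElem_append_left hi] at this
  · refine (finite_Iic (g s)).subset fun n hn => ?_
    by_contra! hgt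
    refine hn fun i hi => ?_
    rw [List.length_append, List.length_singleton] at hi
    rcases (Nat.lt_succ_iff.mp hi).lt_or_eq with hi | rfl
    · rw [List.take_append_of_le_length hi.le, List.getElem_append_left hi]
      exact hs i hi
    · simpa using hgt

lemma mem_branches_hechlerTree {g : List ℕ → ℕ} {x : ℕ → ℕ} :
    x ∈ branches (hechlerTree g) ↔ Dominates g 0 x := by
  constructor
  · intro hx n _
    simpa [take_res] using hx (n + 1) n (by simp)
  · intro hx n i hi
    simp only [res_length] at hi
    simpa [take_res x hi.le] using hx i (Nat.zero_le i)

theorem exists_hechler_of_not_isDominating {A : Set (ℕ → ℕ)} (h : ¬ IsDominating 0 A) :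
    ∃ H, IsHechler H ∧ branches H ∩ A = ∅ := by
  obtain ⟨g, hg⟩ := exists_dominates_imp_isDominating 0 A
  refine ⟨hechlerTree g, isHechler_hechlerTree g, eq_empty_iff_forall_notMem.mpr ?_⟩
  rintro x ⟨hxH, hxA⟩
  exact h (hg x hxA (mem_branches_hechlerTree.mp hxH))

def diagMax (g : ℕ → List ℕ → List ℕ → ℕ) (r : List ℕ) : ℕ :=
  (Finset.range (r.length + 1) ×ˢ Finset.range (r.length + 1)).sup fun p => g p.1 (r.take p.2) r

lemma le_diagMax (g : ℕ → List ℕ → List ℕ → ℕ) {r : List ℕ} {m j : ℕ} (hm : m ≤ r.length)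
    (hj : j ≤ r.length) : g m (r.take j) r ≤ diagMax g r :=
  Finset.le_sup (f := fun p : ℕ × ℕ => g p.1 (r.take p.2) r) (b := (m, j))
    (Finset.mem_product.mpr ⟨Finset.mem_range.mpr (by omega), Finset.mem_range.mpr (by omega)⟩)

namespace SouslinScheme

variable (B : List ℕ → Set (ℕ → ℕ))

def Positive (s u : List ℕ) : Prop := IsDominating s.length (cyl s ∩ B u)

def Extendable (s u : List ℕ) : Prop := ∃ m, Positive B s (u ++ [m])

/-- `RankLe B u α s`: from `s`, a well-founded infinitely branching tree of rank `≤ α` leads to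
nodes `t` at which `(t, u)` is `Extendable`. -/
inductive RankLe (u : List ℕ) : Ordinal.{0} → List ℕ → Prop
  | extendable {α : Ordinal.{0}} {s : List ℕ} : Extendable B s u → RankLe u α s
  | spread {α : Ordinal.{0}} {s : List ℕ} (A : Set ℕ) (β : ℕ → Ordinal.{0}) :
      A.Infinite → (∀ a ∈ A, β a < α) → (∀ a ∈ A, RankLe u (β a) (s ++ [a])) → RankLe u α s

def Ranked (s u : List ℕ) : Prop := ∃ α, RankLe B u α s

noncomputable def rank (s u : List ℕ) : Ordinal.{0} := sInf {α | RankLe B u α s}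

variable {B}

lemma rankLe_rank {s u : List ℕ} (h : Ranked B s u) : RankLe B u (rank B s u) s :=
  csInf_mem h

lemma rank_le {s u : List ℕ} {α : Ordinal.{0}} (h : RankLe B u α s) : rank B s u ≤ α :=
  csInf_le' h

lemma Ranked.infinite_lower_children {s u : List ℕ} (h : Ranked B s u)
    (hE : ¬ Extendable B s u) :
    {a | Ranked B (s ++ [a]) u ∧ rank B (s ++ [a]) u < rank B s u}.Infinite := by
  cases rankLe_rank h with
  | extendable h => exact absurd h hE
  | spread A β hA hβ hr =>
    exact hA.mono fun a ha => ⟨⟨β a, hr a ha⟩, (rank_le (hr a ha)).trans_lt (hβ a ha)⟩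

lemma ranked_of_infinite {s u : List ℕ} (h : {a | Ranked B (s ++ [a]) u}.Infinite) :
    Ranked B s u :=
  ⟨_, .spread _ (fun a => rank B (s ++ [a]) u) h
    (fun a _ => Order.lt_succ_iff.mpr (Ordinal.le_iSup (fun a => rank B (s ++ [a]) u) a))
    fun _ ha => rankLe_rank ha⟩

lemma exists_bound_ranked_imp (s u : List ℕ) :
    ∃ N, ∀ a, N < a → Ranked B (s ++ [a]) u → Ranked B s u := by
  by_cases hs : Ranked B s u
  · exact ⟨0, fun _ _ _ => hs⟩
  · obtain ⟨N, hN⟩ := (not_infinite.mp (mt ranked_of_infinite hs)).bddAbove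
    exact ⟨N, fun a hNa ha => absurd (hN ha) (not_le.mpr hNa)⟩

lemma Extendable.positive (hB : ∀ u m, B (u ++ [m]) ⊆ B u) {s u : List ℕ}
    (h : Extendable B s u) : Positive B s u :=
  let ⟨m, hm⟩ := h; hm.mono (inter_subset_inter_right _ (hB u m))

lemma RankLe.positive (hB : ∀ u m, B (u ++ [m]) ⊆ B u) {u s : List ℕ} {α : Ordinal.{0}}
    (h : RankLe B u α s) : Positive B s u := by
  induction h with
  | extendable h => exact h.positive hB
  | spread A β hA _ _ ih =>
    exact isDominating_cyl_iff.mpr (hA.mono fun a ha => by simpa [Positive] using ih a ha)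

theorem ranked_of_positive (hsplit : ∀ u, B u ⊆ ⋃ m, B (u ++ [m])) {s u : List ℕ}
    (h : Positive B s u) : Ranked B s u := by
  by_contra hs
  choose N hN using fun t => exists_bound_ranked_imp (B := B) t u
  choose g hg using fun m (t : List ℕ) =>
    exists_dominates_imp_isDominating t.length (cyl t ∩ B (u ++ [m]))
  -- `x` dominates the bounds `N`, so `(x↾i, u)` stays unranked for `i ≥ |s|`, and the tests
  -- `g m`, so `(x↾j, u⌢m)` is positive as soon as `j ≥ m` and `x ∈ B (u⌢m)`
  obtain ⟨x, ⟨hxs, hxB⟩, hdom⟩ := h fun r => max (N r) (diagMax g r)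
  obtain ⟨m, hxm⟩ := mem_iUnion.mp (hsplit u hxB)
  have hpath : ∀ i, s.length ≤ i → ¬ Ranked B (res x i) u := by
    intro i hi
    induction i, hi using Nat.le_induction with
    | base => rwa [show res x s.length = s from hxs]
    | succ i hi ih =>
      rw [res_succ]
      exact mt (hN _ _ ((le_max_left _ _).trans_lt (hdom i hi))) ih
  set j := max m s.length
  have hnpos : ¬ Positive B (res x j) (u ++ [m]) := fun hpos =>
    hpath j (le_max_right _ _) ⟨0, .extendable ⟨m, hpos⟩⟩
  refine hnpos (hg m _ x ⟨mem_cyl_res x j, hxm⟩ fun n hn => ?_)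
  rw [res_length] at hn
  calc g m (res x j) (res x n)
      = g m ((res x n).take j) (res x n) := by rw [take_res x hn]
    _ ≤ diagMax g (res x n) := le_diagMax g (by rw [res_length]; omega) (by rwa [res_length])
    _ ≤ max (N (res x n)) (diagMax g (res x n)) := le_max_right _ _
    _ < x n := hdom n (le_trans (le_max_right _ _) hn)

variable (B)

open Classical in
noncomputable def nextLabel (s u : List ℕ) : List ℕ :=
  if h : Extendable B s u then u ++ [h.choose] else u

def IsChild (s u : List ℕ) (a : ℕ) : Prop :=
  Ranked B (s ++ [a]) (nextLabel B s u) ∧ (¬ Extendable B s u → rank B (s ++ [a]) u < rank B s u)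

inductive Labelled : List ℕ → List ℕ → Prop
  | nil : Labelled [] []
  | snoc {s u : List ℕ} {a : ℕ} :
      Labelled s u → IsChild B s u a → Labelled (s ++ [a]) (nextLabel B s u)

def laverTree : Set (List ℕ) := {s | ∃ u, Labelled B s u}

variable {B}

lemma nextLabel_of_extendable {s u : List ℕ} (h : Extendable B s u) :
    ∃ m, nextLabel B s u = u ++ [m] ∧ Positive B s (u ++ [m]) :=
  ⟨h.choose, dif_pos h, h.choose_spec⟩

lemma nextLabel_of_not_extendable {s u : List ℕ} (h : ¬ Extendable B s u) : nextLabel B s u = u :=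
  dif_neg h

lemma prefix_nextLabel (s u : List ℕ) : u <+: nextLabel B s u := by
  by_cases h : Extendable B s u
  · obtain ⟨m, hm, -⟩ := nextLabel_of_extendable h
    exact hm ▸ List.prefix_append u [m]
  · rw [nextLabel_of_not_extendable h]

lemma Labelled.nil_inv {u : List ℕ} (h : Labelled B [] u) : u = [] := by
  generalize hs : ([] : List ℕ) = s at h
  cases h with
  | nil => rfl
  | snoc => simp at hs

lemma Labelled.snoc_inv {s v : List ℕ} {a : ℕ} (h : Labelled B (s ++ [a]) v) :
    ∃ u, Labelled B s u ∧ v = nextLabel B s u ∧ IsChild B s u a := by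
  generalize ht : s ++ [a] = t at h
  cases h with
  | nil => simp at ht
  | snoc hu hc =>
    obtain ⟨rfl, h⟩ := List.append_inj' ht rfl
    obtain rfl : a = _ := by simpa using h
    exact ⟨_, hu, rfl, hc⟩

lemma Labelled.unique {s u v : List ℕ} (hu : Labelled B s u) (hv : Labelled B s v) : u = v := by
  induction s using List.reverseRecOn generalizing u v with
  | nil => rw [hu.nil_inv, hv.nil_inv]
  | append_singleton s a ih =>
    obtain ⟨u', hu', rfl, -⟩ := hu.snoc_inv
    obtain ⟨v', hv', rfl, -⟩ := hv.snoc_inv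
    rw [ih hu' hv']

lemma Labelled.ranked (h₀ : Ranked B [] []) {s u : List ℕ} (h : Labelled B s u) : Ranked B s u := by
  cases h with
  | nil => exact h₀
  | snoc _ hc => exact hc.1

lemma Labelled.infinite_children (hsplit : ∀ u, B u ⊆ ⋃ m, B (u ++ [m])) (h₀ : Ranked B [] [])
    {s u : List ℕ} (h : Labelled B s u) : {a | IsChild B s u a}.Infinite := by
  by_cases hE : Extendable B s u
  · obtain ⟨m, hm, hpos⟩ := nextLabel_of_extendable hE
    refine (isDominating_cyl_iff.mp hpos).mono fun a ha => ⟨?_, fun h => absurd hE h⟩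
    rw [hm]
    exact ranked_of_positive hsplit (by simpa [Positive] using ha)
  · refine ((h.ranked h₀).infinite_lower_children hE).mono fun a ha => ⟨?_, fun _ => ha.2⟩
    rw [nextLabel_of_not_extendable hE]
    exact ha.1

lemma isSubtree_laverTree : IsSubtree (laverTree B) := by
  rintro _ hs t ⟨r, rfl⟩
  induction r using List.reverseRecOn with
  | nil => simpa using hs
  | append_singleton r a ih =>
    obtain ⟨u, hs⟩ := hs
    rw [← List.append_assoc] at hs
    obtain ⟨u', hu', -⟩ := hs.snoc_inv
    exact ih ⟨u', hu'⟩

lemma isLaver_laverTree (hsplit : ∀ u, B u ⊆ ⋃ m, B (u ++ [m])) (h₀ : Ranked B [] []) :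
    IsLaver (laverTree B) :=
  ⟨isSubtree_laverTree, ⟨[], .nil⟩, fun _ ⟨_, hu⟩ =>
    (hu.infinite_children hsplit h₀).mono fun _ ha => ⟨_, hu.snoc ha⟩⟩

lemma exists_lt_length_of_labels {x : ℕ → ℕ} {u : ℕ → List ℕ}
    (hstep : ∀ n, u (n + 1) = nextLabel B (res x n) (u n) ∧ IsChild B (res x n) (u n) (x n))
    (n : ℕ) : ∃ m, (u n).length < (u m).length := by
  by_contra! hle
  have hstall : ∀ k, u (n + k) = u n →
      ¬ Extendable B (res x (n + k)) (u n) ∧ u (n + k + 1) = u n := by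
    intro k hk
    have hE : ¬ Extendable B (res x (n + k)) (u n) := fun hE => by
      obtain ⟨m, hm, -⟩ := nextLabel_of_extendable hE
      have := hle (n + k + 1)
      rw [(hstep _).1, hk, hm, List.length_append] at this
      simp at this
    exact ⟨hE, by rw [(hstep _).1, hk, nextLabel_of_not_extendable hE]⟩
  have hconst : ∀ k, u (n + k) = u n := by
    intro k
    induction k with
    | zero => rfl
    | succ k ih => exact (hstall k ih).2
  -- once the label is stuck at `u n`, the ranks of the nodes of `x` would decrease forever
  obtain ⟨k, hk⟩ := WellFounded.not_rel_apply_succ (r := (· < ·))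
    fun k => rank B (res x (n + k)) (u n)
  have hdrop := (hstep (n + k)).2.2
  rw [hconst k] at hdrop
  exact hk (res_succ x (n + k) ▸ hdrop (hstall k (hconst k)).1)

theorem exists_labels_of_mem_branches (hB : ∀ u m, B (u ++ [m]) ⊆ B u) (h₀ : Ranked B [] [])
    {x : ℕ → ℕ} (hx : x ∈ branches (laverTree B)) :
    ∃ u : ℕ → List ℕ, (∀ n, u n <+: u (n + 1)) ∧ (∀ ℓ, ∃ n, ℓ < (u n).length) ∧
      ∀ n, (cyl (res x n) ∩ B (u n)).Nonempty := by
  choose u hu using hx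
  have hstep : ∀ n, u (n + 1) = nextLabel B (res x n) (u n) ∧ IsChild B (res x n) (u n) (x n) := by
    intro n
    obtain ⟨v, hv, hnext, hc⟩ := (res_succ x n ▸ hu (n + 1)).snoc_inv
    rw [(hu n).unique hv]
    exact ⟨hnext, hc⟩
  refine ⟨u, fun n => (hstep n).1 ▸ prefix_nextLabel _ _, fun ℓ => ?_,
    fun n => (rankLe_rank ((hu n).ranked h₀)).positive hB |>.nonempty⟩
  induction ℓ with
  | zero =>
    obtain ⟨m, hm⟩ := exists_lt_length_of_labels hstep 0
    exact ⟨m, by omega⟩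
  | succ ℓ ih =>
    obtain ⟨n, hn⟩ := ih
    obtain ⟨m, hm⟩ := exists_lt_length_of_labels hstep n
    exact ⟨m, by omega⟩

end SouslinScheme

lemma exists_mem_cyl_of_prefix_chain {u : ℕ → List ℕ} (hmono : ∀ n, u n <+: u (n + 1))
    (hunb : ∀ ℓ, ∃ n, ℓ < (u n).length) : ∃ y, ∀ n, y ∈ cyl (u n) := by
  choose N hN using hunb
  have hpre := Nat.rel_of_forall_rel_succ_of_le List.IsPrefix hmono
  refine ⟨fun ℓ => (u (N ℓ))[ℓ]'(hN ℓ), fun n => List.ext_getElem (by simp) fun i _ hi => ?_⟩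
  rw [getElem_res, (hpre (le_max_left (N i) n)).getElem, (hpre (le_max_right (N i) n)).getElem]

lemma tendsto_of_mem_cyl {z : ℕ → ℕ → ℕ} {v : ℕ → List ℕ} {y : ℕ → ℕ}
    (hz : ∀ n, z n ∈ cyl (v n)) (hy : ∀ n, y ∈ cyl (v n))
    (hv : ∀ ℓ, ∀ᶠ n in atTop, ℓ < (v n).length) : Tendsto z atTop (𝓝 y) :=
  tendsto_pi_nhds.mpr fun ℓ => tendsto_const_nhds.congr' <| (hv ℓ).mono fun n hn => by
    show y ℓ = z n ℓ
    rw [apply_eq_getElem_of_mem_cyl (hz n) hn, apply_eq_getElem_of_mem_cyl (hy n) hn]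

theorem mem_image_of_labels {C : Set (ℕ → ℕ)} {f : (ℕ → ℕ) → (ℕ → ℕ)} (hC : IsClosed C)
    (hf : ContinuousOn f C) {x : ℕ → ℕ} {u : ℕ → List ℕ} (hmono : ∀ n, u n <+: u (n + 1))
    (hunb : ∀ ℓ, ∃ n, ℓ < (u n).length)
    (hne : ∀ n, (cyl (res x n) ∩ f '' (C ∩ cyl (u n))).Nonempty) : x ∈ f '' C := by
  obtain ⟨y, hy⟩ := exists_mem_cyl_of_prefix_chain hmono hunb
  choose z hzx hzf using hne
  choose w hw hwz using hzf
  have hlen : ∀ ℓ, ∀ᶠ n in atTop, ℓ < (u n).length := fun ℓ => by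
    obtain ⟨N, hN⟩ := hunb ℓ
    exact (eventually_ge_atTop N).mono fun n hn =>
      hN.trans_le (Nat.rel_of_forall_rel_succ_of_le List.IsPrefix hmono hn).length_le
  have hwy : Tendsto w atTop (𝓝 y) := tendsto_of_mem_cyl (fun n => (hw n).2) hy hlen
  have hzx : Tendsto z atTop (𝓝 x) := tendsto_of_mem_cyl hzx (mem_cyl_res x)
    fun ℓ => (eventually_gt_atTop ℓ).mono fun n hn => by simpa using hn
  have hyC : y ∈ C := hC.mem_of_tendsto hwy (.of_forall fun n => (hw n).1)
  refine ⟨y, hyC, tendsto_nhds_unique ?_ hzx⟩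
  have := (hf y hyC).tendsto.comp (tendsto_nhdsWithin_iff.mpr ⟨hwy, .of_forall fun n => (hw n).1⟩)
  simpa [Function.comp_def, hwz] using this

open SouslinScheme in
theorem exists_laver_subset_image {C : Set (ℕ → ℕ)} {f : (ℕ → ℕ) → (ℕ → ℕ)} (hC : IsClosed C)
    (hf : ContinuousOn f C) (h : IsDominating 0 (f '' C)) :
    ∃ L, IsLaver L ∧ branches L ⊆ f '' C := by
  set B : List ℕ → Set (ℕ → ℕ) := fun u => f '' (C ∩ cyl u)
  have hB : ∀ u m, B (u ++ [m]) ⊆ B u := fun u m =>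
    image_mono (inter_subset_inter_right _ (cyl_append_subset u m))
  have hsplit : ∀ u, B u ⊆ ⋃ m, B (u ++ [m]) := by
    rintro u _ ⟨y, ⟨hyC, hyu⟩, rfl⟩
    exact mem_iUnion.mpr ⟨y u.length, y, ⟨hyC, mem_cyl_append_apply hyu⟩, rfl⟩
  have h₀ : Ranked B [] [] := ranked_of_positive hsplit (by simpa [Positive, B] using h)
  refine ⟨laverTree B, isLaver_laverTree hsplit h₀, fun x hx => ?_⟩
  obtain ⟨u, hmono, hunb, hne⟩ := exists_labels_of_mem_branches hB h₀ hx
  exact mem_image_of_labels hC hf hmono hunb hne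

theorem hechler_laver_dichotomy (A : Set (ℕ → ℕ)) (hA : IsAnalytic A) :
    (∃ H : Set (List ℕ), IsHechler H ∧ branches H ∩ A = ∅) ∨
    (∃ L : Set (List ℕ), IsLaver L ∧ branches L ⊆ A) := by
  obtain ⟨C, f, hC, hf, rfl⟩ := hA
  by_cases h : IsDominating 0 (f '' C)
  · exact Or.inr (exists_laver_subset_image hC hf h)
  · exact Or.inl (exists_hechler_of_not_isDominating h)
end

section
/- (Silver) Every analytic set has the Ramsey property: if A is an analytic subset of the Cantor space 2^ω and infinite subsets of ω are identified with their characteristic functions, then there exists an infinite set X ⊆ ω such that either every infinite Y ⊆ X has its characteristic function in A, or no infinite Y ⊆ X has its characteristic function in A. -/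
open scoped Classical

namespace SilverProof



/-- `lt' s M`: every element of the finite set `s` is below every element of `M`. -/
def lt' (s : Finset ℕ) (M : Set ℕ) : Prop := ∀ a ∈ s, ∀ b ∈ M, a < b

/-- The Ellentuck basic set `[s, M]`. -/
def bas (s : Finset ℕ) (M : Set ℕ) : Set (Set ℕ) :=
  {Y | Y.Infinite ∧ ↑s ⊆ Y ∧ Y ⊆ ↑s ∪ M}

/-- `(s, M)` is a condition: `M` infinite and `s < M`. -/
def cond (s : Finset ℕ) (M : Set ℕ) : Prop := M.Infinite ∧ lt' s M

/-- The part of `X` beyond `t`. -/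
def after (t : Finset ℕ) (X : Set ℕ) : Set ℕ := {m ∈ X | ∀ a ∈ t, a < m}

lemma lt'_mono {s : Finset ℕ} {M N : Set ℕ} (h : N ⊆ M) (hl : lt' s M) : lt' s N :=
  fun a ha b hb => hl a ha b (h hb)

lemma lt'_subset {s t : Finset ℕ} {M : Set ℕ} (h : s ⊆ t) (hl : lt' t M) : lt' s M :=
  fun a ha => hl a (h ha)

lemma cond_mono {s : Finset ℕ} {M N : Set ℕ} (hN : N.Infinite) (h : N ⊆ M)
    (hc : cond s M) : cond s N := ⟨hN, lt'_mono h hc.2⟩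

lemma bas_mono {s : Finset ℕ} {M N : Set ℕ} (h : N ⊆ M) : bas s N ⊆ bas s M :=
  fun Y hY => ⟨hY.1, hY.2.1, hY.2.2.trans (Set.union_subset_union_right _ h)⟩

lemma mem_bas_self {s : Finset ℕ} {M : Set ℕ} (hc : cond s M) : (↑s ∪ M) ∈ bas s M :=
  ⟨Set.Infinite.mono Set.subset_union_right hc.1, Set.subset_union_left, subset_rfl⟩

lemma bas_nonempty {s : Finset ℕ} {M : Set ℕ} (hc : cond s M) : (bas s M).Nonempty :=
  ⟨_, mem_bas_self hc⟩

lemma infinite_of_mem_bas {s : Finset ℕ} {M : Set ℕ} {Y : Set ℕ} (h : Y ∈ bas s M) :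
    Y.Infinite := h.1

/-- Adding one element from `M` to the stem refines the basic set. -/
lemma bas_insert {s : Finset ℕ} {M : Set ℕ} {n : ℕ} (hn : n ∈ M) :
    bas (insert n s) {m ∈ M | n < m} ⊆ bas s M := by
  intro Y hY
  refine ⟨hY.1, ?_, ?_⟩
  · exact fun a ha => hY.2.1 (by simp [ha])
  · intro y hy
    rcases hY.2.2 hy with h | h
    · rcases Finset.mem_insert.1 (by exact_mod_cast h) with rfl | h'
      · exact Or.inr hn
      · exact Or.inl h'
    · exact Or.inr h.1

lemma after_subset {t : Finset ℕ} {X : Set ℕ} : after t X ⊆ X := fun _ h => h.1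

lemma after_mono {t : Finset ℕ} {X Y : Set ℕ} (h : X ⊆ Y) : after t X ⊆ after t Y :=
  fun m hm => ⟨h hm.1, hm.2⟩

/-- Key refinement lemma: a point in two basic sets lies in a basic subset of both. -/
lemma refine₂ {s s' : Finset ℕ} {M M' : Set ℕ} {Y : Set ℕ} (hc : cond s M) (hc' : cond s' M')
    (hY : Y ∈ bas s M) (hY' : Y ∈ bas s' M') {m : ℕ}
    (hm : ∀ a ∈ s, a ≤ m) (hm' : ∀ a ∈ s', a ≤ m) :
    ∃ t : Finset ℕ, ∃ N : Set ℕ, cond t N ∧ ↑t ⊆ Y ∧ (∀ a ∈ t, a ≤ m) ∧ s ⊆ t ∧ s' ⊆ t ∧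
      N ⊆ M ∩ M' ∧ Y ∈ bas t N ∧ bas t N ⊆ bas s M ∩ bas s' M' := by
  have hfin : (Y ∩ Set.Iic m).Finite := (Set.finite_Iic m).inter_of_right _
  refine ⟨hfin.toFinset, (M ∩ M') \ Set.Iic m, ?_, ?_, ?_, ?_, ?_, ?_, ?_, ?_⟩
  · constructor
    · -- (M ∩ M') \ Iic m is infinite, since Y \ (s ∪ s' ∪ Iic m) ⊆ it and Y infinite
      have hsub : Y \ (↑s ∪ ↑s' ∪ Set.Iic m) ⊆ (M ∩ M') \ Set.Iic m := by
        intro y hy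
        have hyM : y ∈ M := by
          rcases hY.2.2 hy.1 with h | h
          · exact absurd (Or.inl (Or.inl h)) hy.2
          · exact h
        have hyM' : y ∈ M' := by
          rcases hY'.2.2 hy.1 with h | h
          · exact absurd (Or.inl (Or.inr h)) hy.2
          · exact h
        exact ⟨⟨hyM, hyM'⟩, fun hle => hy.2 (Or.inr hle)⟩
      exact Set.Infinite.mono hsub
        ((hY.1.diff (((s.finite_toSet.union s'.finite_toSet).union (Set.finite_Iic m)))))
    · intro a ha b hb
      have ham : a ≤ m := (hfin.mem_toFinset.1 ha).2
      have : ¬ b ≤ m := hb.2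
      omega
  · intro a ha; exact (hfin.mem_toFinset.1 ha).1
  · intro a ha; exact (hfin.mem_toFinset.1 ha).2
  · exact fun a ha => hfin.mem_toFinset.2 ⟨hY.2.1 (Finset.mem_coe.2 ha), hm a ha⟩
  · exact fun a ha => hfin.mem_toFinset.2 ⟨hY'.2.1 (Finset.mem_coe.2 ha), hm' a ha⟩
  · exact Set.diff_subset
  · refine ⟨hY.1, fun a ha => (hfin.mem_toFinset.1 ha).1, ?_⟩
    intro y hy
    by_cases hle : y ≤ m
    · exact Or.inl (by simpa [hfin.mem_toFinset] using ⟨hy, hle⟩)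
    · have hyM : y ∈ M := by
        rcases hY.2.2 hy with h | h
        · exact absurd (le_of_lt (Nat.lt_succ_of_le (hm y h)) |>.trans (le_refl _))
            (by exact fun _ => hle (hm y h))
        · exact h
      have hyM' : y ∈ M' := by
        rcases hY'.2.2 hy with h | h
        · exact absurd (hm' y h) hle
        · exact h
      exact Or.inr ⟨⟨hyM, hyM'⟩, fun h => hle h⟩
  · intro Z hZ
    have htY : ↑hfin.toFinset ⊆ Y := fun a ha => (hfin.mem_toFinset.1 ha).1
    constructor
    · refine ⟨hZ.1, ?_, ?_⟩
      · intro a ha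
        have haY : a ∈ Y := hY.2.1 ha
        have ham : a ≤ m := hm a ha
        exact hZ.2.1 (hfin.mem_toFinset.2 ⟨haY, ham⟩)
      · intro z hz
        rcases hZ.2.2 hz with h | h
        · rcases hY.2.2 (htY h) with h' | h'
          · exact Or.inl h'
          · exact Or.inr h'
        · exact Or.inr h.1.1
    · refine ⟨hZ.1, ?_, ?_⟩
      · intro a ha
        have haY : a ∈ Y := hY'.2.1 ha
        have ham : a ≤ m := hm' a ha
        exact hZ.2.1 (hfin.mem_toFinset.2 ⟨haY, ham⟩)
      · intro z hz
        rcases hZ.2.2 hz with h | h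
        · rcases hY'.2.2 (htY h) with h' | h'
          · exact Or.inl h'
          · exact Or.inr h'
        · exact Or.inr h.1.2



/-- Ellentuck-open subsets of the space of infinite subsets of `ℕ`. -/
def EOpen (O : Set (Set ℕ)) : Prop :=
  ∀ Y ∈ O, ∃ s M, cond s M ∧ Y ∈ bas s M ∧ bas s M ⊆ O

/-- Nowhere dense (w.r.t. the Ellentuck topology). -/
def Nwd (S : Set (Set ℕ)) : Prop :=
  ∀ s M, cond s M → ∃ t N, cond t N ∧ bas t N ⊆ bas s M ∧ Disjoint (bas t N) S

/-- Meager. -/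
def Meager (S : Set (Set ℕ)) : Prop :=
  ∃ F : ℕ → Set (Set ℕ), (∀ n, Nwd (F n)) ∧ S ⊆ ⋃ n, F n

/-- Baire property w.r.t. the Ellentuck topology. -/
def BP (S : Set (Set ℕ)) : Prop :=
  ∃ O, EOpen O ∧ Meager ((S \ O) ∪ (O \ S))

lemma Nwd.mono {S T : Set (Set ℕ)} (h : Nwd S) (hTS : T ⊆ S) : Nwd T := by
  intro s M hc
  obtain ⟨t, N, h1, h2, h3⟩ := h s M hc
  exact ⟨t, N, h1, h2, h3.mono_right hTS⟩

lemma Meager.mono {S T : Set (Set ℕ)} (h : Meager S) (hTS : T ⊆ S) : Meager T := by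
  obtain ⟨F, h1, h2⟩ := h; exact ⟨F, h1, hTS.trans h2⟩

lemma Nwd.meager {S : Set (Set ℕ)} (h : Nwd S) : Meager S :=
  ⟨fun _ => S, fun _ => h, Set.subset_iUnion (fun _ : ℕ => S) 0⟩

lemma nwd_empty : Nwd (∅ : Set (Set ℕ)) := fun s M hc => ⟨s, M, hc, subset_rfl, by simp⟩

lemma meager_empty : Meager (∅ : Set (Set ℕ)) := nwd_empty.meager

lemma meager_iUnion {ι : Type*} [Encodable ι] {S : ι → Set (Set ℕ)}
    (h : ∀ i, Meager (S i)) : Meager (⋃ i, S i) := by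
  choose F h1 h2 using h
  refine ⟨fun n => match (Encodable.decode (α := ι) (Nat.unpair n).1) with
    | some i => F i (Nat.unpair n).2
    | none => ∅, fun n => ?_, ?_⟩
  · cases hd : Encodable.decode (α := ι) (Nat.unpair n).1 with
    | none => simpa [hd] using nwd_empty
    | some i => simpa [hd] using h1 i (Nat.unpair n).2
  · intro Y hY
    obtain ⟨i, hi⟩ := Set.mem_iUnion.1 hY
    obtain ⟨k, hk⟩ := Set.mem_iUnion.1 (h2 i hi)
    refine Set.mem_iUnion.2 ⟨Nat.pair (Encodable.encode i) k, ?_⟩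
    simp [Nat.unpair_pair, Encodable.encodek]
    exact hk

lemma meager_union {S T : Set (Set ℕ)} (hS : Meager S) (hT : Meager T) : Meager (S ∪ T) := by
  have := meager_iUnion (ι := Bool) (S := fun b => bif b then S else T) (by
    intro b; cases b <;> simpa)
  refine this.mono ?_
  intro Y hY
  rcases hY with h | h
  · exact Set.mem_iUnion.2 ⟨true, h⟩
  · exact Set.mem_iUnion.2 ⟨false, h⟩

/-- The set of non-infinite sets is nowhere dense. -/
lemma nwd_nonInf : Nwd {Y : Set ℕ | ¬ Y.Infinite} := by
  intro s M hc
  refine ⟨s, M, hc, subset_rfl, Set.disjoint_left.2 ?_⟩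
  intro Y hY h
  exact h hY.1

/-- The "space" of infinite sets, as a basic set. -/
lemma inf_eq_bas : {Y : Set ℕ | Y.Infinite} = bas ∅ Set.univ := by
  ext Y; simp [bas]

lemma cond_empty_univ : cond (∅ : Finset ℕ) Set.univ :=
  ⟨Set.infinite_univ, by simp [lt']⟩

lemma eOpen_empty : EOpen (∅ : Set (Set ℕ)) := fun _ h => absurd h (Set.notMem_empty _)

lemma eOpen_bas {s : Finset ℕ} {M : Set ℕ} (hc : cond s M) : EOpen (bas s M) :=
  fun Y hY => ⟨s, M, hc, hY, subset_rfl⟩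

lemma eOpen_union {O O' : Set (Set ℕ)} (h : EOpen O) (h' : EOpen O') : EOpen (O ∪ O') := by
  intro Y hY
  rcases hY with hY | hY
  · obtain ⟨s, M, h1, h2, h3⟩ := h Y hY; exact ⟨s, M, h1, h2, h3.trans Set.subset_union_left⟩
  · obtain ⟨s, M, h1, h2, h3⟩ := h' Y hY; exact ⟨s, M, h1, h2, h3.trans Set.subset_union_right⟩

lemma eOpen_iUnion {ι : Sort*} {O : ι → Set (Set ℕ)} (h : ∀ i, EOpen (O i)) :
    EOpen (⋃ i, O i) := by
  intro Y hY
  obtain ⟨i, hi⟩ := Set.mem_iUnion.1 hY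
  obtain ⟨s, M, h1, h2, h3⟩ := h i Y hi
  exact ⟨s, M, h1, h2, h3.trans (Set.subset_iUnion _ i)⟩

/-- The exterior of a set: the union of all basic sets disjoint from it. -/
def Ext (S : Set (Set ℕ)) : Set (Set ℕ) :=
  {Y | ∃ t N, cond t N ∧ Disjoint (bas t N) S ∧ Y ∈ bas t N}

lemma eOpen_Ext (S : Set (Set ℕ)) : EOpen (Ext S) := by
  intro Y hY
  obtain ⟨t, N, h1, h2, h3⟩ := hY
  exact ⟨t, N, h1, h3, fun Z hZ => ⟨t, N, h1, h2, hZ⟩⟩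

lemma Ext_disjoint (S : Set (Set ℕ)) : Disjoint (Ext S) S := by
  rw [Set.disjoint_left]
  rintro Y ⟨t, N, _, h2, h3⟩ hS
  exact Set.disjoint_left.1 h2 h3 hS

lemma bas_subset_Ext {S : Set (Set ℕ)} {t : Finset ℕ} {N : Set ℕ} (hc : cond t N)
    (h : Disjoint (bas t N) S) : bas t N ⊆ Ext S :=
  fun Y hY => ⟨t, N, hc, h, hY⟩


/-- Convenient refinement: a common basic refinement of two basic sets at a point. -/
lemma refine₂' {s s' : Finset ℕ} {M M' : Set ℕ} {Y : Set ℕ} (hc : cond s M) (hc' : cond s' M')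
    (hY : Y ∈ bas s M) (hY' : Y ∈ bas s' M') :
    ∃ t N, cond t N ∧ Y ∈ bas t N ∧ bas t N ⊆ bas s M ∩ bas s' M' := by
  obtain ⟨t, N, h1, _, _, _, _, _, h5, h6⟩ := refine₂ hc hc' hY hY'
    (m := s.sup id ⊔ s'.sup id)
    (fun a ha => le_sup_of_le_left (Finset.le_sup (f := id) ha))
    (fun a ha => le_sup_of_le_right (Finset.le_sup (f := id) ha))
  exact ⟨t, N, h1, h5, h6⟩

/-- The boundary of an Ellentuck-open set is nowhere dense. -/
lemma nwd_boundary {O : Set (Set ℕ)} (hO : EOpen O) :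
    Nwd ({Y : Set ℕ | Y.Infinite} \ (O ∪ Ext O)) := by
  intro s M hc
  by_cases h : (bas s M ∩ O).Nonempty
  · obtain ⟨Y, hY, hYO⟩ := h
    obtain ⟨u, P, cu, hYu, hPO⟩ := hO Y hYO
    obtain ⟨t, N, h1, h2, h3⟩ := refine₂' hc cu hY hYu
    refine ⟨t, N, h1, fun Z hZ => (h3 hZ).1, Set.disjoint_left.2 ?_⟩
    intro Z hZ hZb
    exact hZb.2 (Or.inl (hPO (h3 hZ).2))
  · refine ⟨s, M, hc, subset_rfl, Set.disjoint_left.2 ?_⟩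
    intro Z hZ hZb
    refine hZb.2 (Or.inr ?_)
    exact bas_subset_Ext hc (Set.disjoint_left.2 fun W hW hWO => h ⟨W, hW, hWO⟩) hZ

lemma meager_symmdiff_compl_Ext {O : Set (Set ℕ)} (hO : EOpen O) :
    Meager ((Oᶜ \ Ext O) ∪ (Ext O \ Oᶜ)) := by
  have h1 : Ext O \ Oᶜ = ∅ := by
    rw [Set.diff_eq_empty]
    exact Set.subset_compl_iff_disjoint_right.2 (Ext_disjoint O)
  rw [h1, Set.union_empty]
  have h2 : Oᶜ \ Ext O ⊆ {Y : Set ℕ | ¬ Y.Infinite} ∪ ({Y : Set ℕ | Y.Infinite} \ (O ∪ Ext O)) := by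
    intro Z hZ
    by_cases hi : Z.Infinite
    · exact Or.inr ⟨hi, fun h => h.elim (fun h => hZ.1 h) (fun h => hZ.2 h)⟩
    · exact Or.inl hi
  exact (meager_union nwd_nonInf.meager (nwd_boundary hO).meager).mono h2

/-- Baire property is preserved by meager symmetric difference. -/
lemma BP.congr {S T : Set (Set ℕ)} (hS : BP S) (h : Meager ((S \ T) ∪ (T \ S))) : BP T := by
  obtain ⟨O, hO, hm⟩ := hS
  refine ⟨O, hO, (meager_union h hm).mono ?_⟩
  intro Z hZ
  rcases hZ with ⟨hZT, hZO⟩ | ⟨hZO, hZT⟩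
  · by_cases hZS : Z ∈ S
    · exact Or.inr (Or.inl ⟨hZS, hZO⟩)
    · exact Or.inl (Or.inr ⟨hZT, hZS⟩)
  · by_cases hZS : Z ∈ S
    · exact Or.inl (Or.inl ⟨hZS, hZT⟩)
    · exact Or.inr (Or.inr ⟨hZO, hZS⟩)

lemma Meager.bp {S : Set (Set ℕ)} (h : Meager S) : BP S := by
  refine ⟨∅, eOpen_empty, ?_⟩
  simpa using h

lemma EOpen.bp {O : Set (Set ℕ)} (h : EOpen O) : BP O :=
  ⟨O, h, by simpa using meager_empty⟩

lemma BP.compl {S : Set (Set ℕ)} (hS : BP S) : BP Sᶜ := by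
  obtain ⟨O, hO, hm⟩ := hS
  refine ⟨Ext O, eOpen_Ext O, ?_⟩
  have key := meager_symmdiff_compl_Ext hO
  refine (meager_union hm key).mono ?_
  intro Z hZ
  rcases hZ with ⟨hZ1, hZ2⟩ | ⟨hZ1, hZ2⟩
  · -- Z ∈ Sᶜ, Z ∉ Ext O
    by_cases hZO : Z ∈ O
    · exact Or.inl (Or.inr ⟨hZO, hZ1⟩)
    · exact Or.inr (Or.inl ⟨hZO, hZ2⟩)
  · -- Z ∈ Ext O, Z ∈ S
    by_cases hZO : Z ∈ O
    · exact Or.inr (Or.inr ⟨hZ1, fun h => h hZO⟩)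
    · exact Or.inl (Or.inl ⟨not_not.1 hZ2, hZO⟩)

lemma BP.union {S T : Set (Set ℕ)} (hS : BP S) (hT : BP T) : BP (S ∪ T) := by
  obtain ⟨O, hO, hm⟩ := hS
  obtain ⟨O', hO', hm'⟩ := hT
  refine ⟨O ∪ O', fun Y hY => ?_, (meager_union hm hm').mono ?_⟩
  · rcases hY with hY | hY
    · obtain ⟨s, M, h1, h2, h3⟩ := hO Y hY; exact ⟨s, M, h1, h2, h3.trans Set.subset_union_left⟩
    · obtain ⟨s, M, h1, h2, h3⟩ := hO' Y hY; exact ⟨s, M, h1, h2, h3.trans Set.subset_union_right⟩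
  · intro Z hZ
    rcases hZ with ⟨hZ1, hZ2⟩ | ⟨hZ1, hZ2⟩
    · rcases hZ1 with h | h
      · exact Or.inl (Or.inl ⟨h, fun hh => hZ2 (Or.inl hh)⟩)
      · exact Or.inr (Or.inl ⟨h, fun hh => hZ2 (Or.inr hh)⟩)
    · rcases hZ1 with h | h
      · exact Or.inl (Or.inr ⟨h, fun hh => hZ2 (Or.inl hh)⟩)
      · exact Or.inr (Or.inr ⟨h, fun hh => hZ2 (Or.inr hh)⟩)

lemma BP.inter {S T : Set (Set ℕ)} (hS : BP S) (hT : BP T) : BP (S ∩ T) := by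
  have := (hS.compl.union hT.compl).compl
  simpa [Set.compl_union] using this

lemma BP.iUnion {ι : Type*} [Encodable ι] {S : ι → Set (Set ℕ)} (h : ∀ i, BP (S i)) :
    BP (⋃ i, S i) := by
  choose O hO hm using h
  refine ⟨⋃ i, O i, eOpen_iUnion hO, (meager_iUnion (fun i => hm i)).mono ?_⟩
  intro Z hZ
  rcases hZ with ⟨hZ1, hZ2⟩ | ⟨hZ1, hZ2⟩
  · obtain ⟨i, hi⟩ := Set.mem_iUnion.1 hZ1
    exact Set.mem_iUnion.2 ⟨i, Or.inl ⟨hi, fun hh => hZ2 (Set.mem_iUnion.2 ⟨i, hh⟩)⟩⟩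
  · obtain ⟨i, hi⟩ := Set.mem_iUnion.1 hZ1
    exact Set.mem_iUnion.2 ⟨i, Or.inr ⟨hi, fun hh => hZ2 (Set.mem_iUnion.2 ⟨i, hh⟩)⟩⟩


/-- The union of all basic sets whose trace on `E` is meager. -/
def W (E : Set (Set ℕ)) : Set (Set ℕ) :=
  {Y | ∃ t N, cond t N ∧ Meager (bas t N ∩ E) ∧ Y ∈ bas t N}

lemma eOpen_W (E : Set (Set ℕ)) : EOpen (W E) := by
  rintro Y ⟨t, N, h1, h2, h3⟩
  exact ⟨t, N, h1, h3, fun Z hZ => ⟨t, N, h1, h2, hZ⟩⟩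

/-- Banach category theorem for the Ellentuck topology. -/
lemma banach (E : Set (Set ℕ)) : Meager (W E ∩ E) := by
  -- maximal pairwise disjoint family of basic sets with meager trace on E
  set Fam : Set (Set (Set (Set ℕ))) :=
    {𝒟 | (∀ B ∈ 𝒟, ∃ t N, cond t N ∧ B = bas t N ∧ Meager (B ∩ E)) ∧
      𝒟.Pairwise (fun B B' => B ∩ B' = ∅)} with hFam
  obtain ⟨𝒱, hmax⟩ := zorn_subset Fam (by
    intro c hc hchain
    refine ⟨⋃₀ c, ⟨?_, ?_⟩, fun s hs => Set.subset_sUnion_of_mem hs⟩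
    · rintro B ⟨D, hD, hBD⟩
      exact (hc hD).1 B hBD
    · intro B hB B' hB' hne
      obtain ⟨D, hD, hBD⟩ := hB
      obtain ⟨D', hD', hBD'⟩ := hB'
      rcases hchain.total hD hD' with h | h
      · exact (hc hD').2 (h hBD) hBD' hne
      · exact (hc hD).2 hBD (h hBD') hne)
  have h𝒱 := hmax.1
  -- choose data for each member of 𝒱
  choose! t N hcond heq hmea using h𝒱.1
  choose! F hF hFcov using fun B hB => (hmea B hB : Meager (B ∩ E))
  set G : ℕ → Set (Set ℕ) := fun n => ⋃ B ∈ 𝒱, (B ∩ F B n) with hG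
  have hGnwd : ∀ n, Nwd (G n) := by
    intro n s M hc
    by_cases hpos : ∃ B ∈ 𝒱, (bas s M ∩ B).Nonempty
    · obtain ⟨B, hB, Y, hY1, hY2⟩ := hpos
      have hYB : Y ∈ bas (t B) (N B) := (heq B hB) ▸ hY2
      obtain ⟨u, P, hcu, hYu, husub⟩ := refine₂' hc (hcond B hB) hY1 hYB
      obtain ⟨u', P', hcu', hsub', hdisj'⟩ := hF B hB n u P hcu
      refine ⟨u', P', hcu', hsub'.trans (fun Z hZ => (husub hZ).1), Set.disjoint_left.2 ?_⟩
      intro Z hZ hZG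
      obtain ⟨B', hB', hZB', hZF⟩ := Set.mem_iUnion₂.1 hZG
      by_cases hBB : B' = B
      · subst hBB
        exact Set.disjoint_left.1 hdisj' hZ hZF
      · have hZB : Z ∈ B := (heq B hB) ▸ ((husub (hsub' hZ)).2)
        have := h𝒱.2 hB' hB hBB
        exact Set.eq_empty_iff_forall_notMem.1 this Z ⟨hZB', hZB⟩
    · refine ⟨s, M, hc, subset_rfl, Set.disjoint_left.2 ?_⟩
      intro Z hZ hZG
      obtain ⟨B', hB', hZB', _⟩ := Set.mem_iUnion₂.1 hZG
      exact hpos ⟨B', hB', Z, hZ, hZB'⟩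
  have hRnwd : Nwd (W E \ ⋃₀ 𝒱) := by
    intro s M hc
    by_cases hpos : (bas s M ∩ W E).Nonempty
    · obtain ⟨Y, hY1, u₀, P₀, hc₀, hm₀, hY₀⟩ := hpos
      obtain ⟨u, P, hcu, hYu, husub⟩ := refine₂' hc hc₀ hY1 hY₀
      have hmuP : Meager (bas u P ∩ E) :=
        hm₀.mono (Set.inter_subset_inter_left _ (fun Z hZ => (husub hZ).2))
      by_cases hmeet : ∃ B ∈ 𝒱, (bas u P ∩ B).Nonempty
      · obtain ⟨B, hB, Z, hZ1, hZ2⟩ := hmeet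
        have hZB : Z ∈ bas (t B) (N B) := (heq B hB) ▸ hZ2
        obtain ⟨u', P', hcu', hZu', hsub'⟩ := refine₂' hcu (hcond B hB) hZ1 hZB
        refine ⟨u', P', hcu', (fun W hW => (husub ((hsub' hW).1)).1), Set.disjoint_left.2 ?_⟩
        intro V hV hVR
        have : V ∈ B := (heq B hB) ▸ (hsub' hV).2
        exact hVR.2 ⟨B, hB, this⟩
      · exfalso
        have hins : insert (bas u P) 𝒱 ∈ Fam := by
          constructor
          · rintro B (rfl | hB)
            · exact ⟨u, P, hcu, rfl, hmuP⟩
            · exact h𝒱.1 B hB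
          · refine h𝒱.2.insert ?_
            intro B hB _
            have hd : bas u P ∩ B = ∅ := by
              by_contra hne
              exact hmeet ⟨B, hB, Set.nonempty_iff_ne_empty.2 hne⟩
            exact ⟨hd, by rwa [Set.inter_comm] at hd⟩
        have hsub := hmax.2 hins (Set.subset_insert _ _)
        have : bas u P ∈ 𝒱 := hsub (Set.mem_insert _ _)
        have hd := hmeet ⟨bas u P, this, ?_⟩
        · exact hd
        · obtain ⟨Z, hZ⟩ := bas_nonempty hcu
          exact ⟨Z, hZ, hZ⟩
    · refine ⟨s, M, hc, subset_rfl, Set.disjoint_left.2 ?_⟩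
      intro Z hZ hZR
      exact hpos ⟨Z, hZ, hZR.1⟩
  -- conclusion
  refine (meager_union hRnwd.meager (meager_iUnion (fun n => (hGnwd n).meager))).mono ?_
  intro Z ⟨hZW, hZE⟩
  by_cases hZ𝒱 : Z ∈ ⋃₀ 𝒱
  · obtain ⟨B, hB, hZB⟩ := hZ𝒱
    have : Z ∈ ⋃ n, F B n := hFcov B hB ⟨hZB, hZE⟩
    obtain ⟨n, hn⟩ := Set.mem_iUnion.1 this
    exact Or.inr (Set.mem_iUnion.2 ⟨n, Set.mem_iUnion₂.2 ⟨B, hB, hZB, hn⟩⟩)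
  · exact Or.inl ⟨hZW, hZ𝒱⟩

/-- Existence of a Baire-property hull. -/
lemma exists_hull (E : Set (Set ℕ)) :
    ∃ H, BP H ∧ E ⊆ H ∧ ∀ S, BP S → E ⊆ S → Meager (H \ S) := by
  refine ⟨({Y | Y.Infinite} \ W E) ∪ ((W E ∩ E) ∪ {Y | ¬ Y.Infinite}), ?_, ?_, ?_⟩
  · refine BP.union ?_ (BP.union (banach E).bp nwd_nonInf.meager.bp)
    have h1 : BP {Y : Set ℕ | Y.Infinite} := by
      rw [inf_eq_bas]; exact (eOpen_bas cond_empty_univ).bp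
    have h2 : BP (W E)ᶜ := (eOpen_W E).bp.compl
    have := h1.inter h2
    simpa [Set.diff_eq] using this
  · intro Y hY
    by_cases hW : Y ∈ W E
    · exact Or.inr (Or.inl ⟨hW, hY⟩)
    · by_cases hi : Y.Infinite
      · exact Or.inl ⟨hi, hW⟩
      · exact Or.inr (Or.inr hi)
  · intro S hS hES
    obtain ⟨O', hO', hm'⟩ := hS.compl
    have hO'W : O' ⊆ W E := by
      intro Y hY
      obtain ⟨u, P, hcu, hYu, hsub⟩ := hO' Y hY
      refine ⟨u, P, hcu, ?_, hYu⟩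
      refine hm'.mono ?_
      intro Z ⟨hZ1, hZ2⟩
      exact Or.inr ⟨hsub hZ1, fun h => h (hES hZ2)⟩
    have key : Meager (({Y : Set ℕ | Y.Infinite} \ W E) \ S) := by
      refine hm'.mono ?_
      intro Z ⟨⟨_, hZW⟩, hZS⟩
      exact Or.inl ⟨hZS, fun h => hZW (hO'W h)⟩
    refine (meager_union key (meager_union (banach E) nwd_nonInf.meager)).mono ?_
    intro Z ⟨hZ1, hZ2⟩
    rcases hZ1 with h | h | h
    · exact Or.inl ⟨h, hZ2⟩
    · exact Or.inr (Or.inl h)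
    · exact Or.inr (Or.inr h)


lemma filter_gt_infinite {N : Set ℕ} (hN : N.Infinite) (x : ℕ) :
    ({m ∈ N | x < m} : Set ℕ).Infinite := by
  have : {m ∈ N | x < m} = N \ Set.Iic x := by
    ext m
    simp only [Set.mem_setOf_eq, Set.mem_diff, Set.mem_Iic, not_le]
  rw [this]
  exact hN.diff (Set.finite_Iic x)

/-- Least element of an infinite set of naturals. -/
lemma exists_least {N : Set ℕ} (hN : N.Nonempty) : ∃ x ∈ N, ∀ m ∈ N, x ≤ m := by
  obtain ⟨n, hn⟩ := hN
  have h : ∃ k, k ∈ N := ⟨n, hn⟩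
  exact ⟨Nat.find h, Nat.find_spec h, fun m hm => Nat.find_min' h hm⟩

/-- Key propagation claim (Galvin–Prikry): if `(s, M)` has no infinite subset `N`
with `bas s N ⊆ O`, then after shrinking, the same holds for all one-point extensions. -/
lemma key_claim {O : Set (Set ℕ)} {s : Finset ℕ} {M : Set ℕ} (hc : cond s M)
    (hbad : ¬ ∃ N, N ⊆ M ∧ N.Infinite ∧ bas s N ⊆ O) :
    ∃ N, N ⊆ M ∧ N.Infinite ∧ ∀ n ∈ N,
      ¬ ∃ Q, Q ⊆ {m ∈ N | n < m} ∧ Q.Infinite ∧ bas (insert n s) Q ⊆ O := by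
  by_contra hcon
  push_neg at hcon
  -- every infinite subset admits a good one-point extension
  have hyp : ∀ P : Set ℕ, P ⊆ M → P.Infinite →
      ∃ n ∈ P, ∃ Q, Q ⊆ {m ∈ P | n < m} ∧ Q.Infinite ∧ bas (insert n s) Q ⊆ O := by
    intro P hPM hPinf
    obtain ⟨n, hn, Q, h1, h2, h3⟩ := hcon P hPM hPinf
    exact ⟨n, hn, Q, h1, h2, h3⟩
  set T := {P : Set ℕ // P.Infinite ∧ P ⊆ M} with hT
  have hstep : ∀ P : T, ∃ (n : ℕ) (Q : T), n ∈ P.1 ∧ Q.1 ⊆ {m ∈ P.1 | n < m} ∧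
      bas (insert n s) Q.1 ⊆ O := by
    rintro ⟨P, hPinf, hPM⟩
    obtain ⟨n, hn, Q, h1, h2, h3⟩ := hyp P hPM hPinf
    exact ⟨n, ⟨Q, h2, (h1.trans (fun m hm => hm.1)).trans hPM⟩, hn, h1, h3⟩
  let nxt : T → ℕ × T := fun P => ⟨(hstep P).choose, (hstep P).choose_spec.choose⟩
  have nxt_spec : ∀ P : T, (nxt P).1 ∈ P.1 ∧ (nxt P).2.1 ⊆ {m ∈ P.1 | (nxt P).1 < m} ∧
      bas (insert (nxt P).1 s) (nxt P).2.1 ⊆ O := fun P =>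
    (hstep P).choose_spec.choose_spec
  let Pseq : ℕ → T := fun i => Nat.rec ⟨M, hc.1, subset_rfl⟩ (fun _ p => (nxt p).2) i
  let n : ℕ → ℕ := fun i => (nxt (Pseq i)).1
  have hPsucc : ∀ i, (Pseq (i + 1)).1 ⊆ {m ∈ (Pseq i).1 | n i < m} :=
    fun i => (nxt_spec (Pseq i)).2.1
  have hnmem : ∀ i, n i ∈ (Pseq i).1 := fun i => (nxt_spec (Pseq i)).1
  have hbasO : ∀ i, bas (insert (n i) s) (Pseq (i + 1)).1 ⊆ O :=
    fun i => (nxt_spec (Pseq i)).2.2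
  have hPmono : ∀ i j, i ≤ j → (Pseq j).1 ⊆ (Pseq i).1 := by
    intro i j hij
    induction j with
    | zero => simp_all
    | succ j ih =>
      rcases Nat.lt_or_ge i (j+1) with h | h
      · exact ((hPsucc j).trans (fun m hm => hm.1)).trans (ih (Nat.lt_succ_iff.1 h))
      · have : i = j + 1 := le_antisymm hij h
        subst this; exact subset_rfl
  have hnlt : ∀ i j, i < j → n i < n j := by
    intro i j hij
    have : n j ∈ (Pseq (i+1)).1 := hPmono (i+1) j hij (hnmem j)
    exact (hPsucc i this).2
  have hmono : StrictMono n := fun i j h => hnlt i j h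
  set N := Set.range n with hN
  apply hbad
  refine ⟨N, ?_, ?_, ?_⟩
  · rintro m ⟨i, rfl⟩
    exact (Pseq i).2.2 (hnmem i)
  · exact Set.infinite_range_of_injective hmono.injective
  · -- bas s N ⊆ O
    intro Y hY
    have hYs : (Y \ ↑s).Infinite := hY.1.diff s.finite_toSet
    obtain ⟨y₀, hy₀, hy₀min⟩ := exists_least hYs.nonempty
    have hy₀N : y₀ ∈ N := by
      rcases hY.2.2 hy₀.1 with h | h
      · exact absurd h hy₀.2
      · exact h
    obtain ⟨i, hi⟩ := hy₀N
    have hmem : Y ∈ bas (insert (n i) s) (Pseq (i + 1)).1 := by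
      refine ⟨hY.1, ?_, ?_⟩
      · intro a ha
        rcases Finset.mem_insert.1 ha with rfl | ha'
        · rw [hi]; exact hy₀.1
        · exact hY.2.1 ha'
      · intro y hy
        by_cases hys : y ∈ (↑s : Set ℕ)
        · exact Or.inl (by exact_mod_cast Finset.mem_insert_of_mem (by exact_mod_cast hys))
        · have hyN : y ∈ N := by
            rcases hY.2.2 hy with h | h
            · exact absurd h hys
            · exact h
          obtain ⟨j, hj⟩ := hyN
          have hy_ge : y₀ ≤ y := hy₀min y ⟨hy, hys⟩
          by_cases hyy : y = y₀
          · exact Or.inl (by simp [hyy, ← hi])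
          · have : n i < n j := by
              rw [hi, hj]; omega
            have hij : i < j := by
              by_contra hle
              exact absurd (hmono.le_iff_le.2 (Nat.le_of_not_lt hle)) (by omega)
            rw [← hj]
            exact Or.inr (hPmono (i+1) j hij (hnmem j))
    exact hbasO i hmem


section Fusion
variable (D : Finset ℕ → Set ℕ → Prop)

/-- Finite refinement: handle all stems in a finite collection at once. -/
lemma refineT (hmono : ∀ t (N N' : Set ℕ), N' ⊆ N → D t N → D t N')
    (hstep : ∀ t N, cond t N → D t N → ∃ N', N' ⊆ N ∧ N'.Infinite ∧
      ∀ n ∈ N', D (insert n t) {m ∈ N' | n < m}) :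
    ∀ (T : Finset (Finset ℕ)) (N : Set ℕ), N.Infinite →
      (∀ t ∈ T, D t N ∧ lt' t N) → ∃ N', N' ⊆ N ∧ N'.Infinite ∧
        ∀ t ∈ T, ∀ n ∈ N', D (insert n t) {m ∈ N' | n < m} := by
  intro T
  induction T using Finset.induction_on with
  | empty => exact fun N hN _ => ⟨N, subset_rfl, hN, by simp⟩
  | @insert t₀ T ht₀ ih =>
    intro N hN hT
    obtain ⟨N₁, h1, h2, h3⟩ := ih N hN (fun t ht => hT t (Finset.mem_insert_of_mem ht))
    have hD₀ : D t₀ N₁ := hmono _ _ _ h1 (hT t₀ (Finset.mem_insert_self _ _)).1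
    obtain ⟨N', h1', h2', h3'⟩ := hstep t₀ N₁
      ⟨h2, lt'_mono h1 (hT t₀ (Finset.mem_insert_self _ _)).2⟩ hD₀
    refine ⟨N', h1'.trans h1, h2', ?_⟩
    intro t ht n hn
    rcases Finset.mem_insert.1 ht with rfl | ht'
    · exact h3' n hn
    · refine hmono _ _ _ ?_ (h3 t ht' n (h1' hn))
      intro m hm
      exact ⟨h1' hm.1, hm.2⟩

/-- The general fusion lemma. -/
lemma fusion (hmono : ∀ t (N N' : Set ℕ), N' ⊆ N → D t N → D t N')
    (hstep : ∀ t N, cond t N → D t N → ∃ N', N' ⊆ N ∧ N'.Infinite ∧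
      ∀ n ∈ N', D (insert n t) {m ∈ N' | n < m})
    (s : Finset ℕ) (M : Set ℕ) (hc : cond s M) (hD : D s M) :
    ∃ X, X ⊆ M ∧ X.Infinite ∧ lt' s X ∧
      ∀ t : Finset ℕ, s ⊆ t → ↑t ⊆ ↑s ∪ X → D t (after t X) := by
  set Inv : Finset ℕ → Set ℕ → Prop := fun F N =>
    N.Infinite ∧ N ⊆ M ∧ lt' (s ∪ F) N ∧ ∀ t, s ⊆ t → t ⊆ s ∪ F → D t N with hInv
  have step_ex : ∀ F N, Inv F N →
      ∃ x N', x ∈ N ∧ N' ⊆ N ∧ (∀ m ∈ N', x < m) ∧ Inv (insert x F) N' := by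
    intro F N hI
    obtain ⟨hNinf, hNM, hlt, hDall⟩ := hI
    set T : Finset (Finset ℕ) := (s ∪ F).powerset.filter (fun t => s ⊆ t) with hTdef
    have hTmem : ∀ t ∈ T, s ⊆ t ∧ t ⊆ s ∪ F := by
      intro t ht
      rw [hTdef, Finset.mem_filter, Finset.mem_powerset] at ht
      exact ⟨ht.2, ht.1⟩
    obtain ⟨N₁, h1, h2, h3⟩ := refineT D hmono hstep T N hNinf (by
      intro t ht
      exact ⟨hDall t (hTmem t ht).1 (hTmem t ht).2,
        lt'_subset ((hTmem t ht).2) hlt⟩)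
    obtain ⟨x, hxN₁, hxmin⟩ := exists_least h2.nonempty
    refine ⟨x, {m ∈ N₁ | x < m}, h1 hxN₁, (fun m hm => h1 hm.1), fun m hm => hm.2, ?_, ?_, ?_, ?_⟩
    · exact filter_gt_infinite h2 x
    · exact (fun m hm => hNM (h1 hm.1))
    · intro a ha b hb
      rcases Finset.mem_union.1 ha with ha' | ha'
      · exact hlt a (Finset.mem_union_left _ ha') b (h1 hb.1)
      · rcases Finset.mem_insert.1 ha' with rfl | ha''
        · exact hb.2
        · exact hlt a (Finset.mem_union_right _ ha'') b (h1 hb.1)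
    · intro t hst hts
      have hxs : x ∉ s ∪ F := by
        intro hxsF
        exact lt_irrefl x (hlt x hxsF x (h1 hxN₁))
      by_cases hxt : x ∈ t
      · have ht' : t.erase x ∈ T := by
          rw [hTdef, Finset.mem_filter, Finset.mem_powerset]
          constructor
          · intro a ha
            have := hts (Finset.mem_of_mem_erase ha)
            rcases Finset.mem_union.1 this with h | h
            · exact Finset.mem_union_left _ h
            · rcases Finset.mem_insert.1 h with rfl | h'
              · exact absurd rfl (Finset.ne_of_mem_erase ha)
              · exact Finset.mem_union_right _ h'
          · refine Finset.subset_erase.2 ⟨hst, ?_⟩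
            intro hxs'
            exact hxs (Finset.mem_union_left _ hxs')
        have := h3 (t.erase x) ht' x hxN₁
        rwa [Finset.insert_erase hxt] at this
      · have hts' : t ⊆ s ∪ F := by
          intro a ha
          rcases Finset.mem_union.1 (hts ha) with h | h
          · exact Finset.mem_union_left _ h
          · rcases Finset.mem_insert.1 h with rfl | h'
            · exact absurd ha hxt
            · exact Finset.mem_union_right _ h'
        exact hmono _ _ _ (fun m hm => h1 hm.1) (hDall t hst hts')
  -- iterate
  have hInv0 : Inv ∅ M := by
    refine ⟨hc.1, subset_rfl, by simpa using hc.2, ?_⟩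
    intro t hst hts
    have : t = s := Finset.Subset.antisymm (by simpa using hts) hst
    rwa [this]
  set St := {q : Finset ℕ × Set ℕ // Inv q.1 q.2} with hSt
  have step_ex' : ∀ q : St, ∃ (x : ℕ) (q' : St), x ∈ q.1.2 ∧ q'.1.2 ⊆ q.1.2 ∧
      (∀ m ∈ q'.1.2, x < m) ∧ q'.1.1 = insert x q.1.1 := by
    rintro ⟨⟨F, N⟩, hI⟩
    obtain ⟨x, N', h1, h2, h3, h4⟩ := step_ex F N hI
    exact ⟨x, ⟨(insert x F, N'), h4⟩, h1, h2, h3, rfl⟩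
  let nxt : St → ℕ × St := fun q => ⟨(step_ex' q).choose, (step_ex' q).choose_spec.choose⟩
  have nxt_spec : ∀ q : St, (nxt q).1 ∈ q.1.2 ∧ (nxt q).2.1.2 ⊆ q.1.2 ∧
      (∀ m ∈ (nxt q).2.1.2, (nxt q).1 < m) ∧ (nxt q).2.1.1 = insert (nxt q).1 q.1.1 :=
    fun q => (step_ex' q).choose_spec.choose_spec
  let g : ℕ → St := fun i => Nat.rec ⟨(∅, M), hInv0⟩ (fun _ q => (nxt q).2) i
  let x : ℕ → ℕ := fun i => (nxt (g i)).1
  have hg0 : (g 0).1.2 = M := rfl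
  have hgF0 : (g 0).1.1 = ∅ := rfl
  have hgsucc : ∀ i, (g (i+1)) = (nxt (g i)).2 := fun i => rfl
  have hxmem : ∀ i, x i ∈ (g i).1.2 := fun i => (nxt_spec (g i)).1
  have hMsub : ∀ i, (g (i+1)).1.2 ⊆ (g i).1.2 := fun i => (nxt_spec (g i)).2.1
  have hxlt : ∀ i, ∀ m ∈ (g (i+1)).1.2, x i < m := fun i => (nxt_spec (g i)).2.2.1
  have hFsucc : ∀ i, (g (i+1)).1.1 = insert (x i) (g i).1.1 := fun i => (nxt_spec (g i)).2.2.2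
  have hMmono : ∀ i j, i ≤ j → (g j).1.2 ⊆ (g i).1.2 := by
    intro i j hij
    induction j with
    | zero =>
      have h0 : i = 0 := Nat.le_zero.1 hij
      subst h0; exact subset_rfl
    | succ j ih =>
      rcases Nat.lt_or_ge i (j+1) with h | h
      · exact (hMsub j).trans (ih (Nat.lt_succ_iff.1 h))
      · have : i = j + 1 := le_antisymm hij h
        subst this; exact subset_rfl
  have hxStrict : StrictMono x := by
    intro i j hij
    exact hxlt i (x j) (hMmono (i+1) j hij (hxmem j))
  have hFmem : ∀ j k, j < k → x j ∈ (g k).1.1 := by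
    intro j k
    induction k with
    | zero => omega
    | succ k ih =>
      intro hjk
      rw [hFsucc k]
      rcases Nat.lt_or_ge j k with h | h
      · exact Finset.mem_insert_of_mem (ih h)
      · have : j = k := by omega
        subst this; exact Finset.mem_insert_self _ _
  set X := Set.range x with hX
  have hXM : X ⊆ M := by
    rintro m ⟨i, rfl⟩
    exact hMmono 0 i (Nat.zero_le i) (hxmem i)
  refine ⟨X, hXM, Set.infinite_range_of_injective hxStrict.injective, ?_, ?_⟩
  · intro a ha b hb
    exact hc.2 a ha b (hXM hb)
  · intro t hst hts
    have hex : ∃ k, ∀ a ∈ t, a < x k := by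
      refine ⟨t.sup id + 1, ?_⟩
      intro a ha
      have h1 : a ≤ t.sup id := Finset.le_sup (f := id) ha
      have h2 : t.sup id + 1 ≤ x (t.sup id + 1) := hxStrict.le_apply
      omega
    set k := Nat.find hex with hk
    have hkspec : ∀ a ∈ t, a < x k := Nat.find_spec hex
    have htF : t ⊆ s ∪ (g k).1.1 := by
      intro a ha
      rcases hts (Finset.mem_coe.2 ha) with h | h
      · exact Finset.mem_union_left _ (by exact_mod_cast h)
      · obtain ⟨j, hj⟩ := h
        have hjk : j < k := by
          by_contra hge
          have : x k ≤ x j := hxStrict.le_iff_le.2 (Nat.le_of_not_lt hge)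
          have := hkspec a ha
          omega
        rw [← hj] at *
        exact Finset.mem_union_right _ (hFmem j k hjk)
    have hDk : D t (g k).1.2 := (g k).2.2.2.2 t hst htF
    refine hmono _ _ _ ?_ hDk
    rintro m ⟨⟨j, rfl⟩, hm⟩
    have hjk : k ≤ j := by
      by_contra hlt'
      exact Nat.find_min hex (by omega) (fun a ha => hm a ha)
    exact hMmono k j hjk (hxmem j)
end Fusion


/-- The Galvin–Prikry lemma: Ellentuck-open sets are completely Ramsey. -/
lemma eOpen_CR {O : Set (Set ℕ)} (hO : EOpen O) :
    ∀ s M, cond s M → ∃ N, N ⊆ M ∧ N.Infinite ∧ lt' s N ∧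
      (bas s N ⊆ O ∨ Disjoint (bas s N) O) := by
  intro s M hc
  by_cases hgood : ∃ N, N ⊆ M ∧ N.Infinite ∧ bas s N ⊆ O
  · obtain ⟨N, h1, h2, h3⟩ := hgood
    exact ⟨N, h1, h2, lt'_mono h1 hc.2, Or.inl h3⟩
  · set D : Finset ℕ → Set ℕ → Prop :=
      fun t N => ¬ ∃ Q, Q ⊆ N ∧ Q.Infinite ∧ bas t Q ⊆ O with hD
    have hmono : ∀ t (N N' : Set ℕ), N' ⊆ N → D t N → D t N' := by
      rintro t N N' hsub hDN ⟨Q, h1, h2, h3⟩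
      exact hDN ⟨Q, h1.trans hsub, h2, h3⟩
    have hstep : ∀ t N, cond t N → D t N → ∃ N', N' ⊆ N ∧ N'.Infinite ∧
        ∀ n ∈ N', D (insert n t) {m ∈ N' | n < m} := by
      intro t N hcN hDN
      obtain ⟨N', h1, h2, h3⟩ := key_claim hcN hDN
      exact ⟨N', h1, h2, h3⟩
    obtain ⟨X, hXM, hXinf, hXlt, hXD⟩ := fusion D hmono hstep s M hc hgood
    refine ⟨X, hXM, hXinf, hXlt, Or.inr (Set.disjoint_left.2 ?_)⟩
    intro Y hY hYO
    obtain ⟨u, P, hcu, hYu, hPO⟩ := hO Y hYO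
    have hcsX : cond s X := ⟨hXinf, hXlt⟩
    obtain ⟨t, N, hct, htY, _, hst, _, hNsub, hYt, htsub⟩ := refine₂ hcsX hcu hY hYu
      (m := s.sup id ⊔ u.sup id)
      (fun a ha => le_sup_of_le_left (Finset.le_sup (f := id) ha))
      (fun a ha => le_sup_of_le_right (Finset.le_sup (f := id) ha))
    have htX : ↑t ⊆ ↑s ∪ X := htY.trans hY.2.2
    have hDt := hXD t hst htX
    refine hDt ⟨N, ?_, hct.1, fun Z hZ => hPO (htsub hZ).2⟩
    intro n hn
    exact ⟨(hNsub hn).1, fun a ha => hct.2 a ha n hn⟩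

/-- Nowhere dense sets are completely Ramsey null. -/
lemma nwd_CRnull {S : Set (Set ℕ)} (hS : Nwd S) :
    ∀ s M, cond s M → ∃ N, N ⊆ M ∧ N.Infinite ∧ lt' s N ∧ Disjoint (bas s N) S := by
  intro s M hc
  obtain ⟨N, h1, h2, h3, h4⟩ := eOpen_CR (eOpen_Ext S) s M hc
  rcases h4 with h | h
  · exact ⟨N, h1, h2, h3, ((Ext_disjoint S).mono_left h).symm.symm⟩
  · exfalso
    obtain ⟨t, N', hct, hsub, hdisj⟩ := hS s N ⟨h2, h3⟩
    have : bas t N' ⊆ Ext S := bas_subset_Ext hct hdisj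
    obtain ⟨Z, hZ⟩ := bas_nonempty hct
    exact Set.disjoint_left.1 h (hsub hZ) (this hZ)

/-- Meager sets are completely Ramsey null. -/
lemma meager_CRnull {S : Set (Set ℕ)} (hS : Meager S) :
    ∀ s M, cond s M → ∃ N, N ⊆ M ∧ N.Infinite ∧ lt' s N ∧ Disjoint (bas s N) S := by
  obtain ⟨F, hF, hcov⟩ := hS
  intro s M hc
  -- finite shrinking
  have shrink : ∀ (t : Finset ℕ) (N : Set ℕ), cond t N → ∀ k, ∃ N', N' ⊆ N ∧ N'.Infinite ∧
      lt' t N' ∧ ∀ n ≤ k, Disjoint (bas t N') (F n) := by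
    intro t N hcN k
    induction k with
    | zero =>
      obtain ⟨N', h1, h2, h3, h4⟩ := nwd_CRnull (hF 0) t N hcN
      refine ⟨N', h1, h2, h3, ?_⟩
      intro n hn
      have : n = 0 := Nat.le_zero.1 hn
      subst this; exact h4
    | succ k ih =>
      obtain ⟨N₁, h1, h2, h3, h4⟩ := ih
      obtain ⟨N₂, g1, g2, g3, g4⟩ := nwd_CRnull (hF (k+1)) t N₁ ⟨h2, h3⟩
      refine ⟨N₂, g1.trans h1, g2, g3, ?_⟩
      intro n hn
      rcases Nat.lt_or_ge n (k+1) with h | h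
      · exact (h4 n (by omega)).mono_left (bas_mono g1)
      · have : n = k + 1 := by omega
        subst this; exact g4
  set D : Finset ℕ → Set ℕ → Prop :=
    fun t N => ∀ n ≤ t.card, Disjoint (bas t N) (F n) with hD
  have hmono : ∀ t (N N' : Set ℕ), N' ⊆ N → D t N → D t N' := by
    intro t N N' hsub hDN n hn
    exact (hDN n hn).mono_left (bas_mono hsub)
  have hstep : ∀ t N, cond t N → D t N → ∃ N', N' ⊆ N ∧ N'.Infinite ∧
      ∀ n ∈ N', D (insert n t) {m ∈ N' | n < m} := by
    intro t N hcN _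
    obtain ⟨N', h1, h2, h3, h4⟩ := shrink t N hcN (t.card + 1)
    refine ⟨N', h1, h2, ?_⟩
    intro n hn k hk
    have hcard : (insert n t).card ≤ t.card + 1 := Finset.card_insert_le _ _
    exact (h4 k (le_trans hk hcard)).mono_left (bas_insert hn)
  obtain ⟨N₀, n1, n2, n3, n4⟩ := shrink s M hc s.card
  obtain ⟨X, hXM, hXinf, hXlt, hXD⟩ := fusion D hmono hstep s N₀ ⟨n2, n3⟩ (fun n hn => n4 n hn)
  refine ⟨X, hXM.trans n1, hXinf, hXlt, Set.disjoint_left.2 ?_⟩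
  intro Y hY hYS
  obtain ⟨n, hn⟩ := Set.mem_iUnion.1 (hcov hYS)
  -- build a long enough stem
  obtain ⟨C, hCY, hCcard⟩ := hY.1.exists_subset_card_eq n
  set m := C.sup id ⊔ s.sup id with hm
  have hfin : (Y ∩ Set.Iic m).Finite := (Set.finite_Iic m).inter_of_right _
  set t := hfin.toFinset with ht
  have htY : ↑t ⊆ Y := fun a ha => (hfin.mem_toFinset.1 ha).1
  have hst : s ⊆ t := by
    intro a ha
    refine hfin.mem_toFinset.2 ⟨hY.2.1 ha, ?_⟩
    exact le_sup_of_le_right (Finset.le_sup (f := id) ha)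
  have hCt : C ⊆ t := by
    intro a ha
    refine hfin.mem_toFinset.2 ⟨hCY ha, ?_⟩
    exact le_sup_of_le_left (Finset.le_sup (f := id) ha)
  have hcardt : n ≤ t.card := hCcard ▸ Finset.card_le_card hCt
  have htsX : ↑t ⊆ ↑s ∪ X := htY.trans hY.2.2
  have hYbas : Y ∈ bas t (after t X) := by
    refine ⟨hY.1, htY, ?_⟩
    intro y hy
    by_cases hym : y ≤ m
    · exact Or.inl (hfin.mem_toFinset.2 ⟨hy, hym⟩)
    · have hyX : y ∈ X := by
        rcases hY.2.2 hy with h | h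
        · exfalso
          exact hym (le_sup_of_le_right (Finset.le_sup (f := id) (by exact_mod_cast h)))
        · exact h
      refine Or.inr ⟨hyX, ?_⟩
      intro a ha
      exact lt_of_le_of_lt (hfin.mem_toFinset.1 ha).2 (lt_of_not_ge hym)
  exact Set.disjoint_left.1 (hXD t hst htsX n hcardt) hYbas hn

/-- Sets with the Baire property are completely Ramsey. -/
lemma BP_CR {S : Set (Set ℕ)} (hS : BP S) :
    ∀ s M, cond s M → ∃ N, N ⊆ M ∧ N.Infinite ∧
      (bas s N ⊆ S ∨ Disjoint (bas s N) S) := by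
  intro s M hc
  obtain ⟨O, hO, hm⟩ := hS
  obtain ⟨N₁, h1, h2, h3, h4⟩ := meager_CRnull hm s M hc
  obtain ⟨N, g1, g2, g3, g4⟩ := eOpen_CR hO s N₁ ⟨h2, h3⟩
  have hNN₁ : bas s N ⊆ bas s N₁ := bas_mono g1
  rcases g4 with h | h
  · refine ⟨N, g1.trans h1, g2, Or.inl ?_⟩
    intro Z hZ
    by_contra hZS
    exact Set.disjoint_left.1 h4 (hNN₁ hZ) (Or.inr ⟨h hZ, hZS⟩)
  · refine ⟨N, g1.trans h1, g2, Or.inr (Set.disjoint_left.2 ?_)⟩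
    intro Z hZ hZS
    have hZO : Z ∉ O := Set.disjoint_left.1 h hZ
    exact Set.disjoint_left.1 h4 (hNN₁ hZ) (Or.inl ⟨hZS, hZO⟩)


/-- Initial segment of `x` of length `k`, most recent value first. -/
def seg (x : ℕ → ℕ) : ℕ → List ℕ
  | 0 => []
  | (k+1) => x k :: seg x k

@[simp] lemma seg_zero (x : ℕ → ℕ) : seg x 0 = [] := rfl
@[simp] lemma seg_succ (x : ℕ → ℕ) (k : ℕ) : seg x (k+1) = x k :: seg x k := rfl

lemma seg_length (x : ℕ → ℕ) (k : ℕ) : (seg x k).length = k := by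
  induction k with
  | zero => rfl
  | succ k ih => simp [ih]

/-- Baire property is closed under the Souslin operation. -/
lemma souslin_BP (C : List ℕ → Set (Set ℕ)) (hC : ∀ σ, BP (C σ)) :
    BP (⋃ x : ℕ → ℕ, ⋂ k, C (seg x k)) := by
  choose hull hullBP hullSub hullProp using exists_hull
  set AS : List ℕ → Set (Set ℕ) :=
    fun σ => ⋃ x : ℕ → ℕ, ⋃ (_ : seg x σ.length = σ), ⋂ k, C (seg x k) with hAS
  have AS_nil : AS [] = ⋃ x : ℕ → ℕ, ⋂ k, C (seg x k) := by
    apply Set.eq_of_subset_of_subset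
    · exact Set.iUnion_mono fun x => Set.iUnion_subset fun _ => subset_rfl
    · exact Set.iUnion_mono fun x => Set.subset_iUnion_of_subset rfl subset_rfl
  have AS_sub : ∀ σ, AS σ ⊆ C σ := by
    intro σ z hz
    obtain ⟨x, hx, hz⟩ := Set.mem_iUnion₂.1 hz
    have := Set.mem_iInter.1 hz σ.length
    rwa [hx] at this
  have AS_cons_sub : ∀ n σ, AS (n :: σ) ⊆ AS σ := by
    intro n σ z hz
    obtain ⟨x, hx, hz⟩ := Set.mem_iUnion₂.1 hz
    refine Set.mem_iUnion₂.2 ⟨x, ?_, hz⟩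
    have hlen : (n :: σ).length = σ.length + 1 := rfl
    rw [hlen, seg_succ] at hx
    exact (List.cons.injEq _ _ _ _ ▸ hx).2
  have AS_succ : ∀ σ, AS σ ⊆ ⋃ n, AS (n :: σ) := by
    intro σ z hz
    obtain ⟨x, hx, hz⟩ := Set.mem_iUnion₂.1 hz
    refine Set.mem_iUnion.2 ⟨x σ.length, Set.mem_iUnion₂.2 ⟨x, ?_, hz⟩⟩
    have hlen : (x σ.length :: σ).length = σ.length + 1 := rfl
    rw [hlen, seg_succ, hx]
  set H : List ℕ → Set (Set ℕ) :=
    fun σ => List.rec (hull (AS []) ∩ C [])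
      (fun n σ' ih => ih ∩ (hull (AS (n :: σ')) ∩ C (n :: σ'))) σ with hH
  have H_nil : H [] = hull (AS []) ∩ C [] := rfl
  have H_cons : ∀ n σ, H (n :: σ) = H σ ∩ (hull (AS (n :: σ)) ∩ C (n :: σ)) := fun _ _ => rfl
  have H_BP : ∀ σ, BP (H σ) := by
    intro σ
    induction σ with
    | nil => exact (hullBP _).inter (hC _)
    | cons n σ ih => exact ih.inter ((hullBP _).inter (hC _))
  have H_AS : ∀ σ, AS σ ⊆ H σ := by
    intro σ
    induction σ with
    | nil => exact Set.subset_inter (hullSub _) (AS_sub _)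
    | cons n σ ih =>
      rw [H_cons]
      exact Set.subset_inter ((AS_cons_sub n σ).trans ih)
        (Set.subset_inter (hullSub _) (AS_sub _))
  have H_C : ∀ σ, H σ ⊆ C σ := by
    intro σ
    cases σ with
    | nil => exact Set.inter_subset_right
    | cons n σ => rw [H_cons]; exact fun z hz => hz.2.2
  have H_hull : ∀ σ, H σ ⊆ hull (AS σ) := by
    intro σ
    cases σ with
    | nil => exact Set.inter_subset_left
    | cons n σ => rw [H_cons]; exact fun z hz => hz.2.1
  have H_meager : ∀ σ, Meager (H σ \ ⋃ n, H (n :: σ)) := by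
    intro σ
    have hBPu : BP (⋃ n, H (n :: σ)) := BP.iUnion (fun n => H_BP (n :: σ))
    have hsub : AS σ ⊆ ⋃ n, H (n :: σ) :=
      (AS_succ σ).trans (Set.iUnion_mono fun n => H_AS _)
    exact (hullProp (AS σ) _ hBPu hsub).mono
      (Set.diff_subset_diff_left (H_hull σ))
  -- the branch argument
  have branch : ∀ z, z ∈ H [] → (∀ σ, z ∈ H σ → ∃ n, z ∈ H (n :: σ)) → z ∈ AS [] := by
    intro z hz hyp
    set h : ℕ → {σ : List ℕ // z ∈ H σ} :=
      fun k => Nat.rec ⟨[], hz⟩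
        (fun _ p => ⟨(hyp p.1 p.2).choose :: p.1, (hyp p.1 p.2).choose_spec⟩) k with hh
    set x : ℕ → ℕ := fun k => ((h (k+1)).1).headI with hx
    have hseg : ∀ k, (h k).1 = seg x k := by
      intro k
      induction k with
      | zero => rfl
      | succ k ih =>
        have e1 : (h (k+1)).1 = (hyp (h k).1 (h k).2).choose :: (h k).1 := rfl
        have e2 : x k = (hyp (h k).1 (h k).2).choose := by
          show ((h (k+1)).1).headI = _
          rw [e1, List.headI_cons]
        rw [seg_succ, e1, e2, ← ih]
    refine Set.mem_iUnion₂.2 ⟨x, rfl, Set.mem_iInter.2 ?_⟩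
    intro k
    have := (h k).2
    rw [hseg k] at this
    exact H_C _ this
  -- conclusion
  have hdiff : H [] \ AS [] ⊆ ⋃ σ : List ℕ, (H σ \ ⋃ n, H (n :: σ)) := by
    intro z ⟨hz1, hz2⟩
    by_contra hcon
    refine hz2 (branch z hz1 ?_)
    intro σ hσ
    by_contra hno
    push_neg at hno
    refine hcon (Set.mem_iUnion.2 ⟨σ, hσ, ?_⟩)
    intro hmem
    obtain ⟨n, hn⟩ := Set.mem_iUnion.1 hmem
    exact hno n hn
  have : BP (AS []) := by
    refine (H_BP []).congr ?_
    have h1 : AS [] \ H [] = ∅ := Set.diff_eq_empty.2 (H_AS [])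
    rw [h1, Set.union_empty]
    exact (meager_iUnion (fun σ : List ℕ => H_meager σ)).mono hdiff
  rwa [AS_nil] at this


lemma seg_eq_iff {x y : ℕ → ℕ} {k : ℕ} : seg y k = seg x k ↔ ∀ i < k, y i = x i := by
  induction k with
  | zero => simp
  | succ k ih =>
    rw [seg_succ, seg_succ, List.cons.injEq, ih]
    constructor
    · rintro ⟨h1, h2⟩ i hi
      rcases Nat.lt_or_ge i k with h | h
      · exact h2 i h
      · have : i = k := by omega
        subst this; exact h1
    · intro h
      exact ⟨h k (Nat.lt_succ_self k), fun i hi => h i (by omega)⟩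

/-- Cylinder determined by a finite sequence. -/
def cylSet (σ : List ℕ) : Set (ℕ → ℕ) := {y | seg y σ.length = σ}

lemma mem_cylSet_seg (y : ℕ → ℕ) (k : ℕ) : y ∈ cylSet (seg y k) := by
  show seg y (seg y k).length = seg y k
  rw [seg_length]

variable {f : (ℕ → ℕ) → (ℕ → Bool)}

/-- Continuity modulus. -/
lemma modulus (hf : Continuous f) (x : ℕ → ℕ) (m : ℕ) :
    ∃ k, ∀ y, seg y k = seg x k → ∀ j < m, f y j = f x j := by
  have hU : IsOpen {w : ℕ → Bool | ∀ j < m, w j = f x j} := by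
    have : {w : ℕ → Bool | ∀ j < m, w j = f x j}
        = ⋂ j ∈ Finset.range m, {w : ℕ → Bool | w j = f x j} := by
      ext w; simp [Finset.mem_range]
    rw [this]
    refine isOpen_biInter_finset (fun j _ => ?_)
    have : IsOpen ((fun w : ℕ → Bool => w j) ⁻¹' {f x j}) :=
      (isOpen_discrete _).preimage (continuous_apply j)
    exact this
  have hV : IsOpen (f ⁻¹' {w : ℕ → Bool | ∀ j < m, w j = f x j}) := hU.preimage hf
  have hxV : x ∈ f ⁻¹' {w : ℕ → Bool | ∀ j < m, w j = f x j} := fun j _ => rfl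
  obtain ⟨I, u, hIu, hpi⟩ := isOpen_pi_iff.1 hV x hxV
  refine ⟨I.sup id + 1, ?_⟩
  intro y hy j hj
  have hyx : ∀ i < I.sup id + 1, y i = x i := seg_eq_iff.1 hy
  have : y ∈ (I : Set ℕ).pi u := by
    intro i hi
    have hi' : i < I.sup id + 1 := Nat.lt_succ_of_le (Finset.le_sup (f := id) hi)
    rw [hyx i hi']
    exact (hIu i hi).2
  exact hpi this j hj

/-- The Souslin scheme for `range f`. -/
lemma range_eq_souslin (hf : Continuous f) :
    Set.range f = ⋃ x : ℕ → ℕ, ⋂ k, closure (f '' cylSet (seg x k)) := by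
  apply Set.eq_of_subset_of_subset
  · rintro z ⟨y, rfl⟩
    refine Set.mem_iUnion.2 ⟨y, Set.mem_iInter.2 fun k => ?_⟩
    exact subset_closure ⟨y, mem_cylSet_seg y k, rfl⟩
  · intro z hz
    obtain ⟨x, hx⟩ := Set.mem_iUnion.1 hz
    have key : ∀ j, z j = f x j := by
      intro j
      obtain ⟨k, hk⟩ := modulus hf x (j + 1)
      have hzk : z ∈ closure (f '' cylSet (seg x k)) := Set.mem_iInter.1 hx k
      have hO : IsOpen {w : ℕ → Bool | w j = z j} := by
        have : IsOpen ((fun w : ℕ → Bool => w j) ⁻¹' {z j}) :=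
          (isOpen_discrete _).preimage (continuous_apply j)
        exact this
      obtain ⟨w, hw1, y, hy1, hy2⟩ := mem_closure_iff.1 hzk _ hO rfl
      have hyx : seg y k = seg x k := by
        have := hy1
        rwa [cylSet, Set.mem_setOf_eq, seg_length] at this
      have h1 : f y j = f x j := hk y hyx j (Nat.lt_succ_self j)
      rw [← hy2] at hw1
      rw [← hw1, h1]
    have : z = f x := funext key
    exact ⟨x, this.symm⟩

/-- Pullback of a (Cantor-)closed set to the Ellentuck world has the Baire property. -/
lemma bp_pullback_closed (Cl : Set (ℕ → Bool)) (hCl : IsClosed Cl) :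
    BP {Y : Set ℕ | (fun n => decide (n ∈ Y)) ∈ Cl} := by
  set chi : Set ℕ → (ℕ → Bool) := fun Y => fun n => decide (n ∈ Y) with hchi
  set O : Set (Set ℕ) := {Y | Y.Infinite ∧ chi Y ∉ Cl} with hO
  have hOopen : EOpen O := by
    rintro Y ⟨hYinf, hYC⟩
    obtain ⟨I, u, hIu, hpi⟩ := isOpen_pi_iff.1 hCl.isOpen_compl (chi Y) hYC
    set m := I.sup id + 1 with hm
    have hfin : (Y ∩ Set.Iio m).Finite := (Set.finite_Iio m).inter_of_right _
    refine ⟨hfin.toFinset, Set.Ici m, ⟨Set.Ici_infinite m, ?_⟩, ⟨hYinf, ?_, ?_⟩, ?_⟩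
    · intro a ha b hb
      exact lt_of_lt_of_le (hfin.mem_toFinset.1 ha).2 hb
    · exact fun a ha => (hfin.mem_toFinset.1 ha).1
    · intro y hy
      rcases Nat.lt_or_ge y m with h | h
      · exact Or.inl (hfin.mem_toFinset.2 ⟨hy, h⟩)
      · exact Or.inr h
    · rintro Z ⟨hZinf, hZ1, hZ2⟩
      refine ⟨hZinf, fun hmem => ?_⟩
      have hagree : ∀ i < m, chi Z i = chi Y i := by
        intro i hi
        have : i ∈ Z ↔ i ∈ Y := by
          constructor
          · intro hiZ
            rcases hZ2 hiZ with h | h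
            · exact (hfin.mem_toFinset.1 h).1
            · exact absurd h (by simp [Set.mem_Ici]; omega)
          · intro hiY
            exact hZ1 (hfin.mem_toFinset.2 ⟨hiY, hi⟩)
        simp only [hchi, decide_eq_decide]
        exact this
      have : chi Z ∈ (I : Set ℕ).pi u := by
        intro i hi
        have hi' : i < m := Nat.lt_succ_of_le (Finset.le_sup (f := id) hi)
        rw [hagree i hi']
        exact (hIu i hi).2
      exact (hpi this) hmem
  refine hOopen.bp.compl.congr (((nwd_nonInf.meager)).mono ?_)
  intro Z hZ
  rcases hZ with ⟨hZ1, hZ2⟩ | ⟨hZ1, hZ2⟩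
  · -- Z ∈ Oᶜ, Z ∉ pullback: then Z is not infinite
    show ¬ Z.Infinite
    intro h
    have hZO : Z ∉ O := hZ1
    exact hZ2 (not_not.1 (fun hc => hZO ⟨h, hc⟩))
  · -- Z ∈ pullback, Z ∉ Oᶜ: contradiction
    exact absurd hZ1 (not_not.1 hZ2).2

end SilverProof


open SilverProof in
/-- Silver's theorem: every analytic subset of Cantor space has the Ramsey property,
where an infinite set `Y ⊆ ω` is identified with its characteristic function. -/
theorem analytic_ramsey (A : Set (ℕ → Bool)) (hA : MeasureTheory.AnalyticSet A) :
    ∃ X : Set ℕ, X.Infinite ∧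
      ((∀ Y : Set ℕ, Y ⊆ X → Y.Infinite → (fun n => decide (n ∈ Y)) ∈ A) ∨
       (∀ Y : Set ℕ, Y ⊆ X → Y.Infinite → (fun n => decide (n ∈ Y)) ∉ A)) := by
  rw [MeasureTheory.AnalyticSet] at hA
  rcases hA with rfl | ⟨f, hf, hrange⟩
  · exact ⟨Set.univ, Set.infinite_univ, Or.inr (fun Y _ _ h => h)⟩
  · set A' : Set (Set ℕ) := {Y : Set ℕ | (fun n => decide (n ∈ Y)) ∈ A} with hA'def
    have hsouslin : A = ⋃ x : ℕ → ℕ, ⋂ k, closure (f '' cylSet (seg x k)) := by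
      rw [← hrange]; exact range_eq_souslin hf
    have hBP : BP A' := by
      have e : A' = ⋃ x : ℕ → ℕ, ⋂ k,
          (fun (Y : Set ℕ) (n : ℕ) => decide (n ∈ Y)) ⁻¹' closure (f '' cylSet (seg x k)) := by
        show (fun (Y : Set ℕ) (n : ℕ) => decide (n ∈ Y)) ⁻¹' A = _
        rw [hsouslin, Set.preimage_iUnion]
        exact Set.iUnion_congr fun x => Set.preimage_iInter
      rw [e]
      exact souslin_BP
        (fun σ => (fun (Y : Set ℕ) (n : ℕ) => decide (n ∈ Y)) ⁻¹' closure (f '' cylSet σ))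
        (fun σ => bp_pullback_closed _ isClosed_closure)
    obtain ⟨N, _, hNinf, hdec⟩ := BP_CR hBP ∅ Set.univ cond_empty_univ
    have hmem : ∀ Y : Set ℕ, Y ⊆ N → Y.Infinite → Y ∈ bas ∅ N := by
      intro Y h1 h2
      refine ⟨h2, by simp, ?_⟩
      intro y hy
      exact Or.inr (h1 hy)
    refine ⟨N, hNinf, ?_⟩
    rcases hdec with h | h
    · exact Or.inl (fun Y h1 h2 => h (hmem Y h1 h2))
    · exact Or.inr (fun Y h1 h2 hYA => Set.disjoint_left.1 h (hmem Y h1 h2) hYA)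
end
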